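/- arXiv:2307.15102 — 4 statements merged into one kernel-verified Lean document; each statement's English description precedes it below -/
import Mathlib

section
/- Let −∞ ≤ a < b ≤ ∞ and let I be one of the intervals (a,b), (a,b], [a,b), [a,b]. Let λ, μ : I → ℂ be continuous and let A(t) be the upper-triangular matrix with diagonal entries λ(t), λ(t) and upper-right entry μ(t). Suppose that κ₂₂(t) := ∫_a^t (1 + |∫_s^t μ(τ) dτ|) e^{∫_s^t Re λ(τ) dτ} ds exists (as a finite, possibly improper, integral) for all t ∈ I, and that K₂₂ := sup_{t∈I} κ₂₂(t) < ∞. Then the system x' = A(t)x is Ulam stable on I with Ulam constant K₂₂ (with respect to the maximum norm on ℂ²). Furthermore, if in addition lim_{t→a⁺} ∫_t^{t₀} Re λ(s) ds = −∞ for t₀ ∈ (a,b), then for every ε > 0 and every continuously differentiable φ : I → ℂ² with sup_{t∈I} ‖φ'(t) − A(t)φ(t)‖∞ ≤ ε, there exists a unique solution x of x' = A(t)x satisfying sup_{t∈I} ‖φ(t) − x(t)‖∞ ≤ K₂₂ε. -/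
open MeasureTheory Filter Set

noncomputable section

/-- Ulam stability on `I` with constant `K` for the system `x' = A(t) x` on `ℂ²`,
with respect to the maximum norm (the sup norm on `Fin 2 → ℂ`). -/
def UlamStable2C (I : Set ℝ) (A : ℝ → Matrix (Fin 2) (Fin 2) ℂ) (K : ℝ) : Prop :=
  0 < K ∧
  ∀ ε : ℝ, 0 < ε →
    ∀ φ φd : ℝ → Fin 2 → ℂ,
      (∀ t ∈ I, HasDerivWithinAt φ (φd t) I t) →
      ContinuousOn φd I →
      (∀ t ∈ I, ‖φd t - (A t).mulVec (φ t)‖ ≤ ε) →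
      ∃ x : ℝ → Fin 2 → ℂ,
        (∀ t ∈ I, HasDerivWithinAt x ((A t).mulVec (x t)) I t) ∧
        ∀ t ∈ I, ‖φ t - x t‖ ≤ K * ε

/-- `κ₂₂(t) = ∫_a^t (1 + |∫_s^t μ|) exp(∫_s^t Re λ) ds`. -/
def kappa22 (a : EReal) (l m : ℝ → ℂ) (t : ℝ) : ℝ :=
  ∫ s in {s : ℝ | a < (s : EReal) ∧ s < t},
    (1 + ‖∫ τ in s..t, m τ‖) * Real.exp (∫ τ in s..t, (l τ).re)

/-! The system is triangular with a scalar diagonal, so it can be solved explicitly. With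
primitives `L' = λ`, `M' = μ`, the matrix `Φ = e^L [[1, M], [0, 1]]` is a fundamental matrix and
`Φ(t) Φ(s)⁻¹ = e^{L t - L s} [[1, M t - M s], [0, 1]]`, whose operator norm for the maximum norm is
the integrand `k(t, s)` of `κ₂₂`. For an approximate solution `φ` with defect `p = φ' - A φ`,
`‖p‖ ≤ ε`, the Duhamel integral `e(t) = ∫ₐᵗ Φ(t) Φ(s)⁻¹ p(s) ds` converges because `k(t, ·)` is
integrable, solves `e' = A e + p`, and satisfies `‖e(t)‖ ≤ κ₂₂(t) ε`; hence `x = φ - e` is a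
solution within `K₂₂ ε` of `φ`.

Two solutions within `K₂₂ ε` of `φ` differ by a bounded solution `d`. Its second component solves
`d₁' = λ d₁`, so it is a bounded multiple of `e^L`, hence zero since `Re L → +∞` at `a`; then the
first component solves the same equation and vanishes too. -/

def realIoo (a : EReal) (t : ℝ) : Set ℝ := {s : ℝ | a < (s : EReal) ∧ s < t}

theorem measurableSet_realIoo (a : EReal) (t : ℝ) : MeasurableSet (realIoo a t) :=
  (measurableSet_Ioi.preimage continuous_coe_real_ereal.measurable).inter measurableSet_Iio

def kernel22 (l m : ℝ → ℂ) (t s : ℝ) : ℝ :=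
  (1 + ‖∫ τ in s..t, m τ‖) * Real.exp (∫ τ in s..t, (l τ).re)

theorem kappa22_eq_setIntegral_kernel22 (a : EReal) (l m : ℝ → ℂ) (t : ℝ) :
    kappa22 a l m t = ∫ s in realIoo a t, kernel22 l m t s :=
  rfl

theorem kernel22_pos (l m : ℝ → ℂ) (t s : ℝ) : 0 < kernel22 l m t s := by
  unfold kernel22
  positivity

section Primitives

variable {E : Type*} [NormedAddCommGroup E] [NormedSpace ℝ E] {I : Set ℝ} {g : ℝ → E}

theorem setIntegral_realIoo_sub_setIntegral_realIoo {a : EReal} {u v : ℝ}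
    (hu : a ≤ u) (hv : a ≤ v) (hgu : IntegrableOn g (realIoo a u))
    (hgv : IntegrableOn g (realIoo a v)) :
    (∫ s in realIoo a v, g s) - ∫ s in realIoo a u, g s = ∫ s in u..v, g s := by
  set S : Set ℝ := (↑) ⁻¹' Ioi a
  have hS : MeasurableSet S := measurableSet_Ioi.preimage continuous_coe_real_ereal.measurable
  have hIio : ∀ t, realIoo a t = Iio t ∩ S := fun t => by ext s; exact and_comm
  have hintegral : ∀ t, ∫ s in realIoo a t, g s = ∫ s in Iic t, S.indicator g s := fun t => by
    rw [integral_Iic_eq_integral_Iio, setIntegral_indicator hS, hIio]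
  have hintegrable : ∀ t, IntegrableOn g (realIoo a t) → IntegrableOn (S.indicator g) (Iic t) :=
    fun t hg => by
      rwa [integrableOn_Iic_iff_integrableOn_Iio, integrableOn_indicator_iff hS, inter_comm,
        ← hIio]
  rw [hintegral u, hintegral v,
    intervalIntegral.integral_Iic_sub_Iic (hintegrable u hgu) (hintegrable v hgv)]
  refine intervalIntegral.integral_congr_ae (ae_of_all _ fun s hs => indicator_of_mem ?_ g)
  exact (le_min hu hv).trans_lt (EReal.coe_lt_coe_iff.2 hs.1)

theorem hasDerivWithinAt_of_intervalIntegral_eq_sub [CompleteSpace E] (hI : I.OrdConnected)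
    {F : ℝ → E} (hg : ContinuousOn g I) {t : ℝ} (ht : t ∈ I)
    (hF : ∀ τ ∈ I, ∫ u in t..τ, g u = F τ - F t) : HasDerivWithinAt F (g t) I t := by
  rw [hasDerivWithinAt_iff_isLittleO, Asymptotics.isLittleO_iff]
  intro δ hδ
  obtain ⟨r, hr, hball⟩ := Metric.continuousWithinAt_iff.1 (hg t ht) δ hδ
  filter_upwards [inter_mem_nhdsWithin I (Metric.ball_mem_nhds t hr)] with τ ⟨hτ, hτr⟩
  have hsub : uIcc t τ ⊆ I := hI.uIcc_subset ht hτ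
  have hlin : F τ - F t - (τ - t) • g t = ∫ u in t..τ, (g u - g t) := by
    rw [intervalIntegral.integral_sub (hg.mono hsub).intervalIntegrable intervalIntegrable_const,
      intervalIntegral.integral_const, hF τ hτ]
  rw [hlin, Real.norm_eq_abs]
  refine intervalIntegral.norm_integral_le_of_norm_le_const fun u hu => ?_
  have hut : dist u t < r :=
    (abs_sub_left_of_mem_uIcc (uIoc_subset_uIcc hu)).trans_lt (Metric.mem_ball.1 hτr)
  exact (dist_eq_norm (g u) (g t) ▸ hball (hsub (uIoc_subset_uIcc hu)) hut).le

theorem hasDerivWithinAt_setIntegral_realIoo [CompleteSpace E] (hI : I.OrdConnected) {a : EReal}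
    (haI : ∀ t ∈ I, a ≤ t) (hg : ContinuousOn g I)
    (hgi : ∀ t ∈ I, IntegrableOn g (realIoo a t)) {t : ℝ} (ht : t ∈ I) :
    HasDerivWithinAt (fun t => ∫ s in realIoo a t, g s) (g t) I t :=
  hasDerivWithinAt_of_intervalIntegral_eq_sub hI hg ht fun τ hτ =>
    (setIntegral_realIoo_sub_setIntegral_realIoo (haI t ht) (haI τ hτ) (hgi t ht) (hgi τ hτ)).symm

theorem Set.OrdConnected.intervalIntegral_eq_sub (hI : I.OrdConnected) (hg : ContinuousOn g I)
    {t₀ s t : ℝ} (ht₀ : t₀ ∈ I) (hs : s ∈ I) (ht : t ∈ I) :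
    ∫ τ in s..t, g τ = (∫ τ in t₀..t, g τ) - ∫ τ in t₀..s, g τ :=
  (intervalIntegral.integral_interval_sub_left
    ((hg.mono (hI.uIcc_subset ht₀ ht)).intervalIntegrable)
    ((hg.mono (hI.uIcc_subset ht₀ hs)).intervalIntegrable)).symm

theorem Set.OrdConnected.hasDerivWithinAt_intervalIntegral [CompleteSpace E]
    (hI : I.OrdConnected) (hg : ContinuousOn g I) {t₀ t : ℝ} (ht₀ : t₀ ∈ I) (ht : t ∈ I) :
    HasDerivWithinAt (fun t => ∫ τ in t₀..t, g τ) (g t) I t :=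
  hasDerivWithinAt_of_intervalIntegral_eq_sub hI hg ht fun _ hτ =>
    hI.intervalIntegral_eq_sub hg ht₀ ht hτ

end Primitives

theorem hasDerivWithinAt_cexp_mul {I : Set ℝ} {L W : ℝ → ℂ} {l q : ℂ} {t : ℝ}
    (hL : HasDerivWithinAt L l I t) (hW : HasDerivWithinAt W (Complex.exp (-L t) * q) I t) :
    HasDerivWithinAt (fun s => Complex.exp (L s) * W s)
      (l * (Complex.exp (L t) * W t) + q) I t := by
  have hinv : Complex.exp (L t) * Complex.exp (-L t) = 1 := by
    rw [← Complex.exp_add, add_neg_cancel, Complex.exp_zero]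
  refine (hL.cexp.mul hW).congr_deriv ?_
  linear_combination q * hinv

theorem norm_cexp_mul_add_mul_le {z c u v : ℂ} {ε : ℝ} (hu : ‖u‖ ≤ ε) (hv : ‖v‖ ≤ ε) :
    ‖Complex.exp z * (u + c * v)‖ ≤ ε * ((1 + ‖c‖) * Real.exp z.re) := by
  have hcv : ‖c * v‖ ≤ ‖c‖ * ε := by rw [norm_mul]; gcongr
  calc ‖Complex.exp z * (u + c * v)‖ ≤ Real.exp z.re * (ε + ‖c‖ * ε) := by
        rw [norm_mul, Complex.norm_exp]; gcongr; exact (norm_add_le _ _).trans (add_le_add hu hcv)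
    _ = ε * ((1 + ‖c‖) * Real.exp z.re) := by ring

theorem norm_cexp_mul_le {z v : ℂ} (c : ℂ) {ε : ℝ} (hv : ‖v‖ ≤ ε) :
    ‖Complex.exp z * v‖ ≤ ε * ((1 + ‖c‖) * Real.exp z.re) := by
  have hε : 0 ≤ ε := (norm_nonneg v).trans hv
  calc ‖Complex.exp z * v‖ ≤ ε * (1 * Real.exp z.re) := by
        rw [norm_mul, Complex.norm_exp, one_mul, mul_comm]; gcongr
    _ ≤ ε * ((1 + ‖c‖) * Real.exp z.re) := by gcongr; linarith [norm_nonneg c]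

theorem kernel22_eq {l m L M : ℝ → ℂ} {s t : ℝ} (hl : IntervalIntegrable l volume s t)
    (hL : ∫ τ in s..t, l τ = L t - L s) (hM : ∫ τ in s..t, m τ = M t - M s) :
    kernel22 l m t s = (1 + ‖M t - M s‖) * Real.exp (L t - L s).re := by
  rw [kernel22, ← hL, ← hM]
  exact congrArg _ (congrArg _ (intervalIntegral.intervalIntegral_re hl))

theorem hasDerivWithinAt_upperTriangular_iff {I : Set ℝ} {x : ℝ → Fin 2 → ℂ} {c d : ℂ}
    {v : Fin 2 → ℂ} {t : ℝ} :
    HasDerivWithinAt x ((!![c, d; 0, c]).mulVec (x t) + v) I t ↔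
      HasDerivWithinAt (fun s => x s 0) (c * x t 0 + d * x t 1 + v 0) I t ∧
        HasDerivWithinAt (fun s => x s 1) (c * x t 1 + v 1) I t := by
  simp [hasDerivWithinAt_pi, Fin.forall_fin_two, dotProduct, Fin.sum_univ_two, Matrix.vecHead,
    Matrix.vecTail]

/-- Variation of constants from `a` for `e' = λ e + q`, where `L' = λ`. -/
def duhamel (a : EReal) (L q : ℝ → ℂ) (t : ℝ) : ℂ :=
  ∫ s in realIoo a t, Complex.exp (L t - L s) * q s

section VariationOfConstants

variable {I : Set ℝ} {a : EReal} {l m L M : ℝ → ℂ}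

theorem hasDerivWithinAt_duhamel (hI : I.OrdConnected) (haI : ∀ t ∈ I, a ≤ t)
    (hL : ∀ t ∈ I, HasDerivWithinAt L (l t) I t) {q : ℝ → ℂ} (hq : ContinuousOn q I)
    (hqi : ∀ t ∈ I, IntegrableOn (fun s => Complex.exp (L t - L s) * q s) (realIoo a t))
    {t : ℝ} (ht : t ∈ I) :
    HasDerivWithinAt (duhamel a L q) (l t * duhamel a L q t + q t) I t := by
  have hexp : ∀ t s, Complex.exp (L t - L s) = Complex.exp (L t) * Complex.exp (-L s) :=
    fun t s => by rw [← Complex.exp_add, sub_eq_add_neg]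
  have hfactor : duhamel a L q = fun t =>
      Complex.exp (L t) * ∫ s in realIoo a t, Complex.exp (-L s) * q s := by
    ext t
    simp only [duhamel, hexp, mul_assoc, integral_const_mul]
  have hLc : ContinuousOn L I := fun t ht => (hL t ht).continuousWithinAt
  have hqi' : ∀ t ∈ I, IntegrableOn (fun s => Complex.exp (-L s) * q s) (realIoo a t) := by
    intro t ht
    refine IntegrableOn.congr_fun ((hqi t ht).const_mul (Complex.exp (-L t))) (fun s _ => ?_)
      (measurableSet_realIoo a t)
    rw [hexp, ← mul_assoc, ← mul_assoc, ← Complex.exp_add, neg_add_cancel, Complex.exp_zero,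
      one_mul]
  rw [hfactor]
  exact hasDerivWithinAt_cexp_mul (hL t ht)
    (hasDerivWithinAt_setIntegral_realIoo hI haI (by fun_prop) hqi' ht)

theorem integrableOn_and_norm_setIntegral_le_kappa22 (hI : I.OrdConnected)
    (hIa : ∀ t ∈ I, realIoo a t ⊆ I) (hl : ContinuousOn l I)
    (hL : ∀ s ∈ I, ∀ t ∈ I, ∫ τ in s..t, l τ = L t - L s)
    (hM : ∀ s ∈ I, ∀ t ∈ I, ∫ τ in s..t, m τ = M t - M s) {t : ℝ} (ht : t ∈ I)
    (hker : IntegrableOn (kernel22 l m t) (realIoo a t)) {F : ℝ → ℂ} (hF : ContinuousOn F I)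
    {ε : ℝ} (hFε : ∀ s ∈ I, ‖F s‖ ≤ ε * ((1 + ‖M t - M s‖) * Real.exp (L t - L s).re)) :
    IntegrableOn F (realIoo a t) ∧ ‖∫ s in realIoo a t, F s‖ ≤ kappa22 a l m t * ε := by
  have hFε' : ∀ᵐ s ∂volume.restrict (realIoo a t), ‖F s‖ ≤ ε * kernel22 l m t s := by
    refine ae_restrict_of_forall_mem (measurableSet_realIoo a t) fun s hs => ?_
    have hs' := hIa t ht hs
    rw [kernel22_eq (hl.mono (hI.uIcc_subset hs' ht)).intervalIntegrable (hL s hs' t ht)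
      (hM s hs' t ht)]
    exact hFε s hs'
  refine ⟨(hker.const_mul ε).mono'
    ((hF.mono (hIa t ht)).aestronglyMeasurable (measurableSet_realIoo a t)) hFε', ?_⟩
  rw [mul_comm, kappa22_eq_setIntegral_kernel22, ← integral_const_mul]
  exact norm_integral_le_of_norm_le (hker.const_mul ε) hFε'

/-- The integrands are the components of `Φ(t) Φ(s)⁻¹ p(s)` for `Φ = e^L [[1, M], [0, 1]]`. -/
theorem integrableOn_and_norm_setIntegral_upperTriangular_le (hI : I.OrdConnected)
    (hIa : ∀ t ∈ I, realIoo a t ⊆ I) (hl : ContinuousOn l I) (hLc : ContinuousOn L I)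
    (hMc : ContinuousOn M I) (hL : ∀ s ∈ I, ∀ t ∈ I, ∫ τ in s..t, l τ = L t - L s)
    (hM : ∀ s ∈ I, ∀ t ∈ I, ∫ τ in s..t, m τ = M t - M s) {t : ℝ} (ht : t ∈ I)
    (hker : IntegrableOn (kernel22 l m t) (realIoo a t))
    {p : ℝ → Fin 2 → ℂ} (hp : ContinuousOn p I) {ε : ℝ} (hpε : ∀ t ∈ I, ‖p t‖ ≤ ε) :
    (IntegrableOn (fun s => Complex.exp (L t - L s) * (p s 0 + (M t - M s) * p s 1))
        (realIoo a t) ∧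
      ‖∫ s in realIoo a t, Complex.exp (L t - L s) * (p s 0 + (M t - M s) * p s 1)‖
        ≤ kappa22 a l m t * ε) ∧
    (IntegrableOn (fun s => Complex.exp (L t - L s) * p s 1) (realIoo a t) ∧
      ‖∫ s in realIoo a t, Complex.exp (L t - L s) * p s 1‖ ≤ kappa22 a l m t * ε) := by
  have hpε₀ : ∀ s ∈ I, ‖p s 0‖ ≤ ε := fun s hs => (norm_le_pi_norm _ 0).trans (hpε s hs)
  have hpε₁ : ∀ s ∈ I, ‖p s 1‖ ≤ ε := fun s hs => (norm_le_pi_norm _ 1).trans (hpε s hs)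
  exact ⟨integrableOn_and_norm_setIntegral_le_kappa22 hI hIa hl hL hM ht hker (by fun_prop)
      fun s hs => norm_cexp_mul_add_mul_le (hpε₀ s hs) (hpε₁ s hs),
    integrableOn_and_norm_setIntegral_le_kappa22 hI hIa hl hL hM ht hker (by fun_prop)
      fun s hs => norm_cexp_mul_le _ (hpε₁ s hs)⟩

theorem exists_hasDerivWithinAt_upperTriangular_add (hI : I.OrdConnected)
    (haI : ∀ t ∈ I, a ≤ t) (hIa : ∀ t ∈ I, realIoo a t ⊆ I)
    (hl : ContinuousOn l I) (hm : ContinuousOn m I)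
    (hL : ∀ s ∈ I, ∀ t ∈ I, ∫ τ in s..t, l τ = L t - L s)
    (hM : ∀ s ∈ I, ∀ t ∈ I, ∫ τ in s..t, m τ = M t - M s)
    (hker : ∀ t ∈ I, IntegrableOn (kernel22 l m t) (realIoo a t))
    {p : ℝ → Fin 2 → ℂ} (hp : ContinuousOn p I) {ε : ℝ} (hpε : ∀ t ∈ I, ‖p t‖ ≤ ε) :
    ∃ e : ℝ → Fin 2 → ℂ,
      (∀ t ∈ I, HasDerivWithinAt e ((!![l t, m t; 0, l t]).mulVec (e t) + p t) I t) ∧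
      ∀ t ∈ I, ‖e t‖ ≤ kappa22 a l m t * ε := by
  have hL' : ∀ t ∈ I, HasDerivWithinAt L (l t) I t := fun t ht =>
    hasDerivWithinAt_of_intervalIntegral_eq_sub hI hl ht (hL t ht)
  have hM' : ∀ t ∈ I, HasDerivWithinAt M (m t) I t := fun t ht =>
    hasDerivWithinAt_of_intervalIntegral_eq_sub hI hm ht (hM t ht)
  have hLc : ContinuousOn L I := fun t ht => (hL' t ht).continuousWithinAt
  have hMc : ContinuousOn M I := fun t ht => (hM' t ht).continuousWithinAt
  have hh := fun t ht => integrableOn_and_norm_setIntegral_upperTriangular_le hI hIa hl hLc hMc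
    hL hM ht (hker t ht) hp hpε
  -- the first component of `∫ₐᵗ Φ(t) Φ(s)⁻¹ p(s) ds`, split into Duhamel integrals
  set e₁ := duhamel a L fun s => p s 1
  set e₀ := fun t => duhamel a L (fun s => p s 0 - M s * p s 1) t + M t * e₁ t
  have hq₀ : ∀ t ∈ I, IntegrableOn
      (fun s => Complex.exp (L t - L s) * (p s 0 - M s * p s 1)) (realIoo a t) := fun t ht =>
    IntegrableOn.congr_fun ((hh t ht).1.1.sub ((hh t ht).2.1.const_mul (M t)))
      (fun s _ => by simp only [Pi.sub_apply]; ring) (measurableSet_realIoo a t)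
  have he₀ : ∀ t ∈ I, e₀ t = ∫ s in realIoo a t,
      Complex.exp (L t - L s) * (p s 0 + (M t - M s) * p s 1) := by
    intro t ht
    simp only [e₀, e₁, duhamel]
    rw [← integral_const_mul, ← integral_add (hq₀ t ht) ((hh t ht).2.1.const_mul (M t))]
    congr 1 with s
    ring
  have he₁ : ∀ t ∈ I, HasDerivWithinAt e₁ (l t * e₁ t + p t 1) I t := fun t ht =>
    hasDerivWithinAt_duhamel hI haI hL' (by fun_prop) (fun t ht => (hh t ht).2.1) ht
  have he₀' : ∀ t ∈ I, HasDerivWithinAt e₀ (l t * e₀ t + m t * e₁ t + p t 0) I t := by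
    intro t ht
    refine ((hasDerivWithinAt_duhamel hI haI hL' (by fun_prop) hq₀ ht).add
      ((hM' t ht).mul (he₁ t ht))).congr_deriv ?_
    ring
  refine ⟨fun t => ![e₀ t, e₁ t], fun t ht => ?_, fun t ht => ?_⟩
  · exact hasDerivWithinAt_upperTriangular_iff.2 ⟨he₀' t ht, he₁ t ht⟩
  · have hbound₁ := (hh t ht).2.2
    refine (pi_norm_le_iff_of_nonneg ((norm_nonneg _).trans hbound₁)).2
      (Fin.forall_fin_two.2 ⟨?_, hbound₁⟩)
    simpa [he₀ t ht] using (hh t ht).1.2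

theorem exists_hasDerivWithinAt_upperTriangular_near (hI : I.OrdConnected)
    (haI : ∀ t ∈ I, a ≤ t) (hIa : ∀ t ∈ I, realIoo a t ⊆ I)
    (hl : ContinuousOn l I) (hm : ContinuousOn m I)
    (hL : ∀ s ∈ I, ∀ t ∈ I, ∫ τ in s..t, l τ = L t - L s)
    (hM : ∀ s ∈ I, ∀ t ∈ I, ∫ τ in s..t, m τ = M t - M s)
    (hker : ∀ t ∈ I, IntegrableOn (kernel22 l m t) (realIoo a t))
    {φ φd : ℝ → Fin 2 → ℂ} (hφ : ∀ t ∈ I, HasDerivWithinAt φ (φd t) I t)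
    (hφd : ContinuousOn φd I) {ε : ℝ}
    (happrox : ∀ t ∈ I, ‖φd t - (!![l t, m t; 0, l t]).mulVec (φ t)‖ ≤ ε) :
    ∃ x : ℝ → Fin 2 → ℂ,
      (∀ t ∈ I, HasDerivWithinAt x ((!![l t, m t; 0, l t]).mulVec (x t)) I t) ∧
      ∀ t ∈ I, ‖φ t - x t‖ ≤ kappa22 a l m t * ε := by
  have hφc : ContinuousOn φ I := fun t ht => (hφ t ht).continuousWithinAt
  have hdefect : ContinuousOn (fun t => φd t - (!![l t, m t; 0, l t]).mulVec (φ t)) I := by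
    refine hφd.sub (continuousOn_pi.2 (Fin.forall_fin_two.2 ⟨?_, ?_⟩)) <;>
      simp only [Matrix.mulVec, dotProduct, Fin.sum_univ_two] <;> fun_prop
  obtain ⟨e, he, heε⟩ :=
    exists_hasDerivWithinAt_upperTriangular_add hI haI hIa hl hm hL hM hker hdefect happrox
  refine ⟨φ - e, fun t ht => ((hφ t ht).sub (he t ht)).congr_deriv ?_, fun t ht => ?_⟩
  · simp only [Pi.sub_apply, Matrix.mulVec_sub]
    abel
  · simpa using heε t ht

end VariationOfConstants

section Uniqueness

variable {I : Set ℝ} {l m L : ℝ → ℂ} {F : Filter ℝ} [F.NeBot]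

theorem eqOn_zero_of_hasDerivWithinAt_mul (hI : Convex ℝ I)
    (hL : ∀ t ∈ I, HasDerivWithinAt L (l t) I t) {d : ℝ → ℂ}
    (hd : ∀ t ∈ I, HasDerivWithinAt d (l t * d t) I t) {C : ℝ} (hC : ∀ t ∈ I, ‖d t‖ ≤ C)
    (hFI : ∀ᶠ t in F, t ∈ I) (hLF : Tendsto (fun t => (L t).re) F atTop) : EqOn d 0 I := by
  intro t ht
  by_contra hdt
  have hconst : ∀ s ∈ I, Complex.exp (-L s) * d s = Complex.exp (-L t) * d t := by
    intro s hs
    have hderiv : ∀ r ∈ I, HasDerivWithinAt (fun r => Complex.exp (-L r) * d r) 0 I r :=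
      fun r hr => ((hL r hr).neg.cexp.mul (hd r hr)).congr_deriv (by ring)
    simpa only [zero_mul, norm_le_zero_iff, sub_eq_zero] using
      hI.norm_image_sub_le_of_norm_hasDerivWithin_le hderiv (fun _ _ => norm_zero.le) ht hs
  have hc : 0 < ‖Complex.exp (-L t) * d t‖ :=
    norm_pos_iff.2 (mul_ne_zero (Complex.exp_ne_zero _) hdt)
  have hnorm : ∀ s ∈ I, ‖d s‖ = Real.exp (L s).re * ‖Complex.exp (-L t) * d t‖ := fun s hs => by
    rw [← Complex.norm_exp, ← norm_mul, ← hconst s hs, ← mul_assoc, ← Complex.exp_add,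
      add_neg_cancel, Complex.exp_zero, one_mul]
  obtain ⟨s, hs, hsC⟩ := (hFI.and
    (((Real.tendsto_exp_atTop.comp hLF).atTop_mul_const hc).eventually_gt_atTop C)).exists
  exact (hC s hs).not_gt (hnorm s hs ▸ hsC)

theorem eqOn_of_hasDerivWithinAt_upperTriangular (hI : Convex ℝ I)
    (hL : ∀ t ∈ I, HasDerivWithinAt L (l t) I t) {x y : ℝ → Fin 2 → ℂ}
    (hx : ∀ t ∈ I, HasDerivWithinAt x ((!![l t, m t; 0, l t]).mulVec (x t)) I t)
    (hy : ∀ t ∈ I, HasDerivWithinAt y ((!![l t, m t; 0, l t]).mulVec (y t)) I t)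
    {C : ℝ} (hC : ∀ t ∈ I, ‖y t - x t‖ ≤ C)
    (hFI : ∀ᶠ t in F, t ∈ I) (hLF : Tendsto (fun t => (L t).re) F atTop) : EqOn y x I := by
  have hd : ∀ t ∈ I, HasDerivWithinAt (y - x)
      ((!![l t, m t; 0, l t]).mulVec ((y - x) t) + 0) I t := fun t ht => by
    rw [add_zero, Pi.sub_apply, Matrix.mulVec_sub]
    exact (hy t ht).sub (hx t ht)
  have hd₁ : EqOn (fun t => (y - x) t 1) 0 I :=
    eqOn_zero_of_hasDerivWithinAt_mul hI hL
      (fun t ht => by simpa using (hasDerivWithinAt_upperTriangular_iff.1 (hd t ht)).2)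
      (fun t ht => (norm_le_pi_norm _ 1).trans (hC t ht)) hFI hLF
  have hd₀ : EqOn (fun t => (y - x) t 0) 0 I :=
    eqOn_zero_of_hasDerivWithinAt_mul hI hL
      (fun t ht => by simpa [hd₁ ht] using (hasDerivWithinAt_upperTriangular_iff.1 (hd t ht)).1)
      (fun t ht => (norm_le_pi_norm _ 0).trans (hC t ht)) hFI hLF
  intro t ht
  rw [← sub_eq_zero]
  ext i
  fin_cases i
  exacts [hd₀ ht, hd₁ ht]

end Uniqueness

theorem tendsto_re_intervalIntegral_atTop {I : Set ℝ} (hI : I.OrdConnected) {l : ℝ → ℂ}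
    (hl : ContinuousOn l I) {t₀ : ℝ} (ht₀ : t₀ ∈ I) {F : Filter ℝ} (hFI : ∀ᶠ t in F, t ∈ I)
    (hlim : Tendsto (fun t => ∫ s in t..t₀, (l s).re) F atBot) :
    Tendsto (fun t => (∫ τ in t₀..t, l τ).re) F atTop := by
  refine (tendsto_neg_atBot_atTop.comp hlim).congr' (hFI.mono fun t ht => ?_)
  rw [Function.comp_apply, ← intervalIntegral.integral_symm]
  exact intervalIntegral.intervalIntegral_re (hl.mono (hI.uIcc_subset ht₀ ht)).intervalIntegrable

theorem kappa22_pos {a : EReal} {l m : ℝ → ℂ} {t : ℝ} (hat : a < t)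
    (hker : IntegrableOn (kernel22 l m t) (realIoo a t)) : 0 < kappa22 a l m t := by
  obtain ⟨t₁, hat₁, ht₁⟩ := EReal.exists_between_coe_real hat
  rw [kappa22_eq_setIntegral_kernel22, setIntegral_pos_iff_support_of_nonneg_ae
    (ae_of_all _ fun s => (kernel22_pos l m t s).le) hker]
  have hsub : Ioo t₁ t ⊆ Function.support (kernel22 l m t) ∩ realIoo a t := fun s hs =>
    ⟨(kernel22_pos l m t s).ne', hat₁.trans (EReal.coe_lt_coe_iff.2 hs.1), hs.2⟩
  refine lt_of_lt_of_le ?_ (measure_mono hsub)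
  simpa using EReal.coe_lt_coe_iff.1 ht₁

section EndpointsInEReal

variable {a b : EReal} {I : Set ℝ}

theorem ordConnected_of_Ioo_subset_of_subset_Icc
    (hI1 : ∀ x : ℝ, a < (x : EReal) → (x : EReal) < b → x ∈ I)
    (hI2 : ∀ x ∈ I, a ≤ (x : EReal) ∧ (x : EReal) ≤ b) : I.OrdConnected := by
  refine ⟨fun x hx y hy z hz => ?_⟩
  rcases hz.1.eq_or_lt with rfl | hxz
  · exact hx
  rcases hz.2.eq_or_lt with rfl | hzy
  · exact hy
  exact hI1 z ((hI2 x hx).1.trans_lt (EReal.coe_lt_coe_iff.2 hxz))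
    ((EReal.coe_lt_coe_iff.2 hzy).trans_le (hI2 y hy).2)

theorem realIoo_subset_of_Ioo_subset (hI1 : ∀ x : ℝ, a < (x : EReal) → (x : EReal) < b → x ∈ I)
    {t : ℝ} (htb : (t : EReal) ≤ b) : realIoo a t ⊆ I := fun s hs =>
  hI1 s hs.1 ((EReal.coe_lt_coe_iff.2 hs.2).trans_le htb)

theorem neBot_comap_coe_nhdsWithin_Ioi (hab : a < b) :
    (comap (fun x : ℝ => (x : EReal)) (nhdsWithin a (Ioi a))).NeBot := by
  refine comap_neBot fun U hU => ?_
  obtain ⟨u, hau, hU⟩ := (mem_nhdsGT_iff_exists_Ioo_subset' hab).1 hU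
  obtain ⟨r, har, hru⟩ := EReal.exists_between_coe_real hau
  exact ⟨r, hU ⟨har, hru⟩⟩

theorem eventually_mem_comap_coe_nhdsWithin_Ioi (hab : a < b)
    (hI1 : ∀ x : ℝ, a < (x : EReal) → (x : EReal) < b → x ∈ I) :
    ∀ᶠ t in comap (fun x : ℝ => (x : EReal)) (nhdsWithin a (Ioi a)), t ∈ I :=
  mem_of_superset (Filter.preimage_mem_comap (Ioo_mem_nhdsGT hab)) fun t ht => hI1 t ht.1 ht.2

end EndpointsInEReal

theorem statement11 (a b : EReal) (hab : a < b) (I : Set ℝ)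
    (hI1 : ∀ x : ℝ, a < (x : EReal) → (x : EReal) < b → x ∈ I)
    (hI2 : ∀ x ∈ I, a ≤ (x : EReal) ∧ (x : EReal) ≤ b)
    (l m : ℝ → ℂ) (hl : ContinuousOn l I) (hm : ContinuousOn m I)
    (hker : ∀ t ∈ I, IntegrableOn
      (fun s => (1 + ‖∫ τ in s..t, m τ‖) * Real.exp (∫ τ in s..t, (l τ).re))
      {s : ℝ | a < (s : EReal) ∧ s < t})
    (hbdd : BddAbove (kappa22 a l m '' I)) :
    UlamStable2C I (fun t => !![l t, m t; 0, l t]) (sSup (kappa22 a l m '' I)) ∧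
    ((∀ t₀ : ℝ, a < (t₀ : EReal) → (t₀ : EReal) < b →
        Tendsto (fun t => ∫ s in t..t₀, (l s).re)
          (Filter.comap (fun x : ℝ => (x : EReal)) (nhdsWithin a (Ioi a))) atBot) →
      ∀ ε : ℝ, 0 < ε → ∀ φ φd : ℝ → Fin 2 → ℂ,
        (∀ t ∈ I, HasDerivWithinAt φ (φd t) I t) →
        ContinuousOn φd I →
        (∀ t ∈ I, ‖φd t - (!![l t, m t; 0, l t]).mulVec (φ t)‖ ≤ ε) →
        ∃ x : ℝ → Fin 2 → ℂ,
          ((∀ t ∈ I, HasDerivWithinAt x ((!![l t, m t; 0, l t]).mulVec (x t)) I t) ∧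
            ∀ t ∈ I, ‖φ t - x t‖ ≤ sSup (kappa22 a l m '' I) * ε) ∧
          ∀ y : ℝ → Fin 2 → ℂ,
            ((∀ t ∈ I, HasDerivWithinAt y ((!![l t, m t; 0, l t]).mulVec (y t)) I t) ∧
              ∀ t ∈ I, ‖φ t - y t‖ ≤ sSup (kappa22 a l m '' I) * ε) →
            EqOn y x I) := by
  have hI := ordConnected_of_Ioo_subset_of_subset_Icc hI1 hI2
  have hIa : ∀ t ∈ I, realIoo a t ⊆ I := fun t ht => realIoo_subset_of_Ioo_subset hI1 (hI2 t ht).2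
  obtain ⟨t₀, ht₀a, ht₀b⟩ := EReal.exists_between_coe_real hab
  have ht₀ : t₀ ∈ I := hI1 t₀ ht₀a ht₀b
  have hκ : ∀ t ∈ I, kappa22 a l m t ≤ sSup (kappa22 a l m '' I) := fun t ht =>
    le_csSup hbdd (mem_image_of_mem _ ht)
  have hstable : UlamStable2C I (fun t => !![l t, m t; 0, l t]) (sSup (kappa22 a l m '' I)) := by
    refine ⟨(kappa22_pos ht₀a (hker t₀ ht₀)).trans_le (hκ t₀ ht₀),
      fun ε hε φ φd hφ hφd happrox => ?_⟩
    obtain ⟨x, hx, hxφ⟩ := exists_hasDerivWithinAt_upperTriangular_near hI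
      (fun t ht => (hI2 t ht).1) hIa hl hm
      (fun s hs t ht => hI.intervalIntegral_eq_sub hl ht₀ hs ht)
      (fun s hs t ht => hI.intervalIntegral_eq_sub hm ht₀ hs ht) hker hφ hφd happrox
    exact ⟨x, hx, fun t ht => (hxφ t ht).trans (by gcongr; exact hκ t ht)⟩
  refine ⟨hstable, fun hlim ε hε φ φd hφ hφd happrox => ?_⟩
  obtain ⟨x, hx, hxφ⟩ := hstable.2 ε hε φ φd hφ hφd happrox
  refine ⟨x, ⟨hx, hxφ⟩, fun y ⟨hy, hyφ⟩ => ?_⟩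
  have := neBot_comap_coe_nhdsWithin_Ioi hab
  have hFI := eventually_mem_comap_coe_nhdsWithin_Ioi hab hI1
  exact eqOn_of_hasDerivWithinAt_upperTriangular hI.convex
    (fun t ht => hI.hasDerivWithinAt_intervalIntegral hl ht₀ ht) hx hy
    (fun t ht => (norm_sub_le_norm_sub_add_norm_sub _ (φ t) _).trans
      (add_le_add (norm_sub_rev (y t) (φ t) ▸ hyφ t ht) (hxφ t ht)))
    hFI (tendsto_re_intervalIntegral_atTop hI hl ht₀ hFI (hlim t₀ ht₀a ht₀b))
end
end

section
/- Let −∞ ≤ a < b ≤ ∞ and let I be one of the intervals (a,b), (a,b], [a,b), [a,b]. Let λ : I → ℂ and μ : I → ℝ be continuous with μ(t) ≥ 0 for all t ∈ I, and let A(t) be the upper-triangular matrix with diagonal entries λ(t), λ(t) and upper-right entry μ(t). Suppose that κ₂₂(t) := ∫_a^t (1 + ∫_s^t μ(τ) dτ) e^{∫_s^t Re λ(τ) dτ} ds exists for all t ∈ I, that K₂₂ := sup_{t∈I} κ₂₂(t) < ∞, and that lim_{t→a⁺} ∫_t^{t₀} Re λ(s) ds = −∞ for t₀ ∈ (a,b).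 Then the system x' = A(t)x is Ulam stable on I (with respect to the maximum norm on ℂ²), and every Ulam constant K for x' = A(t)x on I satisfies K ≥ K₂₂. -/
open MeasureTheory Filter Set

noncomputable section

/-- `κ₂₂(t) = ∫_a^t (1 + ∫_s^t μ) exp(∫_s^t Re λ) ds` for real nonnegative `μ`. -/
def kappa22r (a : EReal) (l : ℝ → ℂ) (m : ℝ → ℝ) (t : ℝ) : ℝ :=
  ∫ s in {s : ℝ | a < (s : EReal) ∧ s < t},
    (1 + ∫ τ in s..t, m τ) * Real.exp (∫ τ in s..t, (l τ).re)

/-!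
The transition matrix of `x' = A(t) x` from `s` to `t` is
`T(t, s) = exp (∫_s^t λ) • [[1, ∫_s^t μ], [0, 1]]`, and for `s ≤ t` its operator norm for the
maximum norm is at most `(1 + ∫_s^t μ) exp (∫_s^t Re λ)`, the integrand of `κ₂₂`. So for a
forcing `q` with `‖q‖ ≤ ε` the variation-of-constants solution `ψ(t) = ∫_a^t T(t, s) q(s) ds` of
`x' = A x + q` satisfies `‖ψ(t)‖ ≤ κ₂₂(t) ε`; given an approximate solution `φ`, take `q` to be its
defect, and then `φ - ψ` is an exact solution within `K₂₂ ε` of `φ`.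

Conversely, `Re ∫_{t₀}^t λ → +∞` as `t → a⁺`, so the only bounded solution of `x' = A x` is zero.
For the unimodular forcing `q(s) = exp (-i Im ∫_s^t λ) (1, 1)` the first component of `ψ(t)` is
exactly `κ₂₂(t)`. Ulam stability with constant `K` yields an exact solution within `K` of `ψ`;
it is bounded, hence zero, so `κ₂₂(t) ≤ ‖ψ(t)‖ ≤ K`.
-/

open Topology Matrix

theorem ContinuousOn.matrix_mulVec {X : Type*} [TopologicalSpace X] {m n R : Type*}
    [TopologicalSpace R] [NonUnitalNonAssocSemiring R] [ContinuousAdd R] [ContinuousMul R]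
    [Fintype n] {A : X → Matrix m n R} {v : X → n → R} {s : Set X} (hA : ContinuousOn A s)
    (hv : ContinuousOn v s) : ContinuousOn (fun x => A x *ᵥ v x) s := by
  rw [continuousOn_iff_continuous_domRestrict] at *
  exact hA.matrix_mulVec hv

namespace UlamTriangular

theorem integrable_mulVec {α : Type*} [MeasurableSpace α] {μ : Measure α} {𝕜 : Type*} [RCLike 𝕜]
    {m n : Type*} [Fintype m] [Fintype n] (M : Matrix m n 𝕜) {f : α → n → 𝕜}
    (hf : Integrable f μ) : Integrable (fun x => M *ᵥ f x) μ :=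
  (LinearMap.toContinuousLinearMap (Matrix.mulVecLin M)).integrable_comp hf

theorem integral_mulVec {α : Type*} [MeasurableSpace α] {μ : Measure α} {𝕜 : Type*} [RCLike 𝕜]
    {m n : Type*} [Fintype m] [Fintype n] (M : Matrix m n 𝕜) {f : α → n → 𝕜}
    (hf : Integrable f μ) : ∫ x, M *ᵥ f x ∂μ = M *ᵥ ∫ x, f x ∂μ :=
  (LinearMap.toContinuousLinearMap (Matrix.mulVecLin M)).integral_comp_comm hf

theorem hasDerivWithinAt_integral_of_ordConnected {E : Type*} [NormedAddCommGroup E]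
    [NormedSpace ℝ E] [CompleteSpace E] {I : Set ℝ} (hI : I.OrdConnected) {g : ℝ → E}
    (hg : ContinuousOn g I) {t₀ t : ℝ} (ht₀ : t₀ ∈ I) (ht : t ∈ I) :
    HasDerivWithinAt (fun u => ∫ x in t₀..u, g x) (g t) I t := by
  have : TendstoIxxClass Ioc (𝓟 I) (𝓟 I) :=
    tendstoIxxClass_principal.2 fun _ hx _ hy => Ioc_subset_Icc_self.trans (hI.out hx hy)
  have : intervalIntegral.FTCFilter t (𝓝[I] t) (𝓝[I] t) :=
    { pure_le := pure_le_nhdsWithin ht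
      le_nhds := inf_le_left
      meas_gen := hI.measurableSet.nhdsWithin_isMeasurablyGenerated t }
  exact intervalIntegral.integral_hasDerivWithinAt_right
    (hg.mono (hI.uIcc_subset ht₀ ht)).intervalIntegrable
    ⟨I, self_mem_nhdsWithin, hg.aestronglyMeasurable hI.measurableSet⟩ (hg t ht)

theorem continuousOn_integral_left_of_ordConnected {E : Type*} [NormedAddCommGroup E]
    [NormedSpace ℝ E] [CompleteSpace E] {I : Set ℝ} (hI : I.OrdConnected) {g : ℝ → E}
    (hg : ContinuousOn g I) {t : ℝ} (ht : t ∈ I) :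
    ContinuousOn (fun s => ∫ x in s..t, g x) I := by
  have hsymm : (fun s => ∫ x in s..t, g x) = fun s => -∫ x in t..s, g x :=
    funext fun s => intervalIntegral.integral_symm t s
  rw [hsymm]
  exact fun s hs =>
    (hasDerivWithinAt_integral_of_ordConnected hI hg ht hs).continuousWithinAt.neg

def realIoo (a : EReal) (t : ℝ) : Set ℝ := {s : ℝ | a < (s : EReal) ∧ s < t}

theorem measurableSet_realIoo (a : EReal) (t : ℝ) : MeasurableSet (realIoo a t) :=
  (measurableSet_Ioi.preimage continuous_coe_real_ereal.measurable).inter measurableSet_Iio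

theorem realIoo_ae_eq_union {a : EReal} {u v : ℝ} (hau : a ≤ u) (huv : u ≤ v) :
    realIoo a v =ᵐ[volume] (realIoo a u ∪ Ioo u v : Set ℝ) := by
  refine ae_eq_set.2 ⟨measure_mono_null (t := {u}) ?_ (measure_singleton u), ?_⟩
  · rintro s ⟨⟨has, hsv⟩, hs⟩
    have hus : u ≤ s := not_lt.1 fun hsu => hs (Or.inl ⟨has, hsu⟩)
    have hsu : s ≤ u := not_lt.1 fun hus => hs (Or.inr ⟨hus, hsv⟩)
    exact le_antisymm hsu hus
  · refine measure_mono_null (fun s hs => ?_) measure_empty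
    rcases hs with ⟨⟨has, hsu⟩ | ⟨hus, hsv⟩, hs⟩
    · exact hs ⟨has, hsu.trans_le huv⟩
    · exact hs ⟨hau.trans_lt (EReal.coe_lt_coe_iff.2 hus), hsv⟩

theorem setIntegral_realIoo_eq_add {E : Type*} [NormedAddCommGroup E] [NormedSpace ℝ E]
    {a : EReal} {u v : ℝ} (hau : a ≤ u) (huv : u ≤ v) {g : ℝ → E}
    (hg : IntegrableOn g (realIoo a v)) :
    ∫ s in realIoo a v, g s = (∫ s in realIoo a u, g s) + ∫ s in u..v, g s := by
  have hsub : realIoo a u ⊆ realIoo a v := fun s hs => ⟨hs.1, hs.2.trans_le huv⟩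
  have hsub' : Ioo u v ⊆ realIoo a v :=
    fun s hs => ⟨hau.trans_lt (EReal.coe_lt_coe_iff.2 hs.1), hs.2⟩
  rw [setIntegral_congr_set (realIoo_ae_eq_union hau huv),
    setIntegral_union (disjoint_left.2 fun _ hs hs' => lt_asymm hs.2 hs'.1) measurableSet_Ioo
      (hg.mono_set hsub) (hg.mono_set hsub'),
    intervalIntegral.integral_of_le huv, integral_Ioc_eq_integral_Ioo]

theorem hasDerivWithinAt_setIntegral_realIoo {E : Type*} [NormedAddCommGroup E]
    [NormedSpace ℝ E] [CompleteSpace E] {a : EReal} {I : Set ℝ} (hI : I.OrdConnected)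
    (haI : ∀ t ∈ I, a ≤ t) {g : ℝ → E} (hg : ContinuousOn g I)
    (hint : ∀ t ∈ I, IntegrableOn g (realIoo a t)) {t : ℝ} (ht : t ∈ I) :
    HasDerivWithinAt (fun u => ∫ s in realIoo a u, g s) (g t) I t := by
  have hsplit : ∀ u ∈ I,
      ∫ s in realIoo a u, g s = (∫ s in realIoo a t, g s) + ∫ s in t..u, g s := by
    intro u hu
    rcases le_total t u with htu | hut
    · exact setIntegral_realIoo_eq_add (haI t ht) htu (hint u hu)
    · rw [setIntegral_realIoo_eq_add (haI u hu) hut (hint t ht),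
        intervalIntegral.integral_symm u t]
      abel
  exact ((hasDerivWithinAt_integral_of_ordConnected hI hg ht ht).const_add _).congr hsplit
    (hsplit t ht)

/-- The exponential of the triangular matrix `[[z, μ], [0, z]]`. -/
def expShear (z μ : ℂ) : Matrix (Fin 2) (Fin 2) ℂ := Complex.exp z • !![1, μ; 0, 1]

theorem expShear_mulVec (z μ : ℂ) (v : Fin 2 → ℂ) :
    expShear z μ *ᵥ v = Complex.exp z • ![v 0 + μ * v 1, v 1] := by
  ext i
  fin_cases i <;>
    simp [expShear, Matrix.mulVec, dotProduct, Fin.sum_univ_two, mul_add, mul_assoc]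

theorem expShear_mul (z μ z' μ' : ℂ) :
    expShear z μ * expShear z' μ' = expShear (z + z') (μ + μ') := by
  ext i j
  fin_cases i <;> fin_cases j <;>
    simp [expShear, Matrix.mul_apply, Fin.sum_univ_two, Complex.exp_add]
  ring

theorem expShear_zero : expShear 0 0 = 1 := by
  ext i j; fin_cases i <;> fin_cases j <;> simp [expShear]

theorem triangular_mulVec (z μ : ℂ) (v : Fin 2 → ℂ) :
    !![z, μ; 0, z] *ᵥ v = ![z * v 0 + μ * v 1, z * v 1] := by
  ext i; fin_cases i <;> simp [Matrix.mulVec, dotProduct, Fin.sum_univ_two]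

theorem norm_expShear_mulVec_le (z : ℂ) {μ : ℝ} (hμ : 0 ≤ μ) (v : Fin 2 → ℂ) :
    ‖expShear z μ *ᵥ v‖ ≤ (1 + μ) * Real.exp z.re * ‖v‖ := by
  have h0 : ‖v 0‖ ≤ ‖v‖ := norm_le_pi_norm v 0
  have h1 : ‖v 1‖ ≤ ‖v‖ := norm_le_pi_norm v 1
  have hvec : ‖![v 0 + μ * v 1, v 1]‖ ≤ (1 + μ) * ‖v‖ := by
    refine (pi_norm_le_iff_of_nonneg (by positivity)).2 (Fin.forall_fin_two.2 ⟨?_, ?_⟩)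
    · calc ‖v 0 + μ * v 1‖ ≤ ‖v 0‖ + μ * ‖v 1‖ := by
            simpa [abs_of_nonneg hμ] using norm_add_le (v 0) (μ * v 1)
        _ ≤ (1 + μ) * ‖v‖ := by nlinarith
    · simpa using h1.trans (le_mul_of_one_le_left (norm_nonneg v) (by linarith))
  rw [expShear_mulVec, norm_smul, Complex.norm_exp]
  calc Real.exp z.re * ‖![v 0 + μ * v 1, v 1]‖ ≤ Real.exp z.re * ((1 + μ) * ‖v‖) := by gcongr
    _ = _ := by ring

theorem exp_mul_exp_neg_im_mul_I (z : ℂ) :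
    Complex.exp z * Complex.exp (-z.im * Complex.I) = Real.exp z.re := by
  rw [← Complex.exp_add, Complex.ofReal_exp]
  congr 1
  apply Complex.ext <;> simp

theorem expShear_mulVec_phase_zero (z : ℂ) (μ : ℝ) :
    (expShear z μ *ᵥ (Complex.exp (-z.im * Complex.I) • ![1, 1])) 0
      = ((1 + μ) * Real.exp z.re : ℝ) := by
  rw [expShear_mulVec]
  simp only [Pi.smul_apply, smul_eq_mul, Matrix.cons_val_zero, Matrix.cons_val_one, mul_one]
  calc _ = (1 + (μ : ℂ)) * (Complex.exp z * Complex.exp (-z.im * Complex.I)) := by ring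
    _ = _ := by rw [exp_mul_exp_neg_im_mul_I]; push_cast; ring

theorem hasDerivWithinAt_expShear_mulVec {z μ : ℝ → ℂ} {w : ℝ → Fin 2 → ℂ} {z' μ' : ℂ}
    {w' : Fin 2 → ℂ} {s : Set ℝ} {t : ℝ} (hz : HasDerivWithinAt z z' s t)
    (hμ : HasDerivWithinAt μ μ' s t) (hw : HasDerivWithinAt w w' s t) :
    HasDerivWithinAt (fun u => expShear (z u) (μ u) *ᵥ w u)
      (!![z', μ'; 0, z'] *ᵥ (expShear (z t) (μ t) *ᵥ w t) + expShear (z t) (μ t) *ᵥ w') s t := by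
  have hw0 := hasDerivWithinAt_pi.1 hw 0
  have hw1 := hasDerivWithinAt_pi.1 hw 1
  simp only [expShear_mulVec, triangular_mulVec]
  refine hasDerivWithinAt_pi.2 (Fin.forall_fin_two.2 ⟨?_, ?_⟩)
  · show HasDerivWithinAt (fun u => Complex.exp (z u) * (w u 0 + μ u * w u 1)) _ s t
    exact (hz.cexp.mul (hw0.add (hμ.mul hw1))).congr_deriv (by simp; ring)
  · show HasDerivWithinAt (fun u => Complex.exp (z u) * w u 1) _ s t
    exact (hz.cexp.mul hw1).congr_deriv (by simp; ring)

theorem eq_expShear_mulVec_of_hasDerivWithinAt {I : Set ℝ} (hI : Convex ℝ I) {l m Λ M : ℝ → ℂ}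
    (hΛ : ∀ t ∈ I, HasDerivWithinAt Λ (l t) I t) (hM : ∀ t ∈ I, HasDerivWithinAt M (m t) I t)
    {x : ℝ → Fin 2 → ℂ} (hx : ∀ t ∈ I, HasDerivWithinAt x (!![l t, m t; 0, l t] *ᵥ x t) I t)
    {t₀ t : ℝ} (ht₀ : t₀ ∈ I) (ht : t ∈ I) :
    x t = expShear (Λ t - Λ t₀) (M t - M t₀) *ᵥ x t₀ := by
  set y : ℝ → Fin 2 → ℂ := fun u => expShear (-Λ u) (-M u) *ᵥ x u with hy_def
  have hy : ∀ u ∈ I, HasDerivWithinAt y 0 I u := fun u hu =>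
    (hasDerivWithinAt_expShear_mulVec (hΛ u hu).neg (hM u hu).neg (hx u hu)).congr_deriv <| by
      simp only [expShear_mulVec, triangular_mulVec]
      ext i; fin_cases i <;> simp <;> ring
  have hy_const : y t = y t₀ := by
    simpa [sub_eq_zero] using
      hI.norm_image_sub_le_of_norm_hasDerivWithin_le hy (fun _ _ => norm_zero.le) ht₀ ht
  calc x t = expShear (Λ t) (M t) *ᵥ y t := by
        simp only [hy_def, mulVec_mulVec, expShear_mul, add_neg_cancel, expShear_zero, one_mulVec]
    _ = _ := by rw [hy_const]; simp only [hy_def, mulVec_mulVec, expShear_mul, sub_eq_add_neg]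

theorem eq_zero_of_norm_exp_mul_le {α : Type*} {F : Filter α} [F.NeBot] {Λ : α → ℂ}
    (hΛ : Tendsto (fun u => (Λ u).re) F atTop) {c : ℂ} {B : ℝ}
    (hB : ∀ᶠ u in F, ‖Complex.exp (Λ u) * c‖ ≤ B) : c = 0 := by
  by_contra hc
  have hgrow : Tendsto (fun u => ‖Complex.exp (Λ u) * c‖) F atTop := by
    simp only [norm_mul, Complex.norm_exp]
    exact (Real.tendsto_exp_atTop.comp hΛ).atTop_mul_const (norm_pos_iff.2 hc)
  obtain ⟨u, hu, hu'⟩ := (hB.and (hgrow.eventually_gt_atTop B)).exists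
  exact hu.not_gt hu'

theorem eq_zero_of_bounded_solution {I : Set ℝ} (hI : Convex ℝ I) {l m Λ M : ℝ → ℂ}
    (hΛ : ∀ t ∈ I, HasDerivWithinAt Λ (l t) I t) (hM : ∀ t ∈ I, HasDerivWithinAt M (m t) I t)
    {F : Filter ℝ} [F.NeBot] (hFI : ∀ᶠ u in F, u ∈ I)
    (hΛF : Tendsto (fun u => (Λ u).re) F atTop)
    {x : ℝ → Fin 2 → ℂ} (hx : ∀ t ∈ I, HasDerivWithinAt x (!![l t, m t; 0, l t] *ᵥ x t) I t)
    {B : ℝ} (hB : ∀ t ∈ I, ‖x t‖ ≤ B) {t : ℝ} (ht : t ∈ I) : x t = 0 := by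
  have hsol : ∀ u ∈ I,
      x u = Complex.exp (Λ u - Λ t) • ![x t 0 + (M u - M t) * x t 1, x t 1] := fun u hu => by
    rw [eq_expShear_mulVec_of_hasDerivWithinAt hI hΛ hM hx ht hu, expShear_mulVec]
  have hΛt : Tendsto (fun u => (Λ u - Λ t).re) F atTop := by
    simpa [sub_eq_add_neg] using tendsto_atTop_add_const_right _ (-(Λ t).re) hΛF
  have h1 : x t 1 = 0 := eq_zero_of_norm_exp_mul_le hΛt <| hFI.mono fun u hu => by
    simpa [hsol u hu] using (norm_le_pi_norm (x u) 1).trans (hB u hu)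
  have h0 : x t 0 = 0 := eq_zero_of_norm_exp_mul_le hΛt <| hFI.mono fun u hu => by
    simpa [hsol u hu, h1] using (norm_le_pi_norm (x u) 0).trans (hB u hu)
  ext i; fin_cases i <;> simp [h0, h1]

theorem continuousOn_triangular {I : Set ℝ} {l : ℝ → ℂ} {m : ℝ → ℝ} (hl : ContinuousOn l I)
    (hm : ContinuousOn m I) : ContinuousOn (fun t => !![l t, (m t : ℂ); 0, l t]) I := by
  refine continuousOn_pi.2 fun i => continuousOn_pi.2 fun j => ?_
  fin_cases i <;> fin_cases j <;> simp <;> fun_prop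

theorem ulamStable2C_of_exists_solution {I : Set ℝ} {A : ℝ → Matrix (Fin 2) (Fin 2) ℂ} {K : ℝ}
    (hK : 0 < K) (hA : ContinuousOn A I)
    (hsol : ∀ ε, 0 < ε → ∀ q : ℝ → Fin 2 → ℂ, ContinuousOn q I → (∀ t ∈ I, ‖q t‖ ≤ ε) →
      ∃ ψ : ℝ → Fin 2 → ℂ, (∀ t ∈ I, HasDerivWithinAt ψ (A t *ᵥ ψ t + q t) I t) ∧
        ∀ t ∈ I, ‖ψ t‖ ≤ K * ε) :
    UlamStable2C I A K := by
  refine ⟨hK, fun ε hε φ φd hφ hφd hres => ?_⟩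
  have hφc : ContinuousOn φ I := fun t ht => (hφ t ht).continuousWithinAt
  obtain ⟨ψ, hψ, hψK⟩ :=
    hsol ε hε (fun t => φd t - A t *ᵥ φ t) (hφd.sub (hA.matrix_mulVec hφc)) hres
  refine ⟨φ - ψ, fun t ht => ((hφ t ht).sub (hψ t ht)).congr_deriv ?_,
    fun t ht => by simpa using hψK t ht⟩
  rw [Pi.sub_apply, Matrix.mulVec_sub]
  abel

theorem norm_le_of_ulamStable2C {I : Set ℝ} {A : ℝ → Matrix (Fin 2) (Fin 2) ℂ} {K : ℝ}
    (hst : UlamStable2C I A K) (hA : ContinuousOn A I)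
    (hunique : ∀ x : ℝ → Fin 2 → ℂ, (∀ t ∈ I, HasDerivWithinAt x (A t *ᵥ x t) I t) →
      ∀ B, (∀ t ∈ I, ‖x t‖ ≤ B) → ∀ t ∈ I, x t = 0)
    {ψ q : ℝ → Fin 2 → ℂ} (hq : ContinuousOn q I) (hq1 : ∀ t ∈ I, ‖q t‖ ≤ 1)
    (hψ : ∀ t ∈ I, HasDerivWithinAt ψ (A t *ᵥ ψ t + q t) I t) {B : ℝ}
    (hψB : ∀ t ∈ I, ‖ψ t‖ ≤ B) {t : ℝ} (ht : t ∈ I) : ‖ψ t‖ ≤ K := by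
  have hψc : ContinuousOn ψ I := fun t ht => (hψ t ht).continuousWithinAt
  obtain ⟨x, hx, hψx⟩ := hst.2 1 one_pos ψ (fun t => A t *ᵥ ψ t + q t) hψ
    ((hA.matrix_mulVec hψc).add hq) (fun t ht => by rw [add_sub_cancel_left]; exact hq1 t ht)
  have hxB : ∀ t ∈ I, ‖x t‖ ≤ B + K * 1 := fun t ht =>
    calc ‖x t‖ = ‖ψ t - (ψ t - x t)‖ := by rw [sub_sub_cancel]
      _ ≤ ‖ψ t‖ + ‖ψ t - x t‖ := norm_sub_le _ _
      _ ≤ B + K * 1 := add_le_add (hψB t ht) (hψx t ht)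
  simpa [hunique x hx _ hxB t ht] using hψx t ht

/-- The transition matrix from time `s` to time `t` of `x' = [[l, m], [0, l]] x`. -/
def transition (l : ℝ → ℂ) (m : ℝ → ℝ) (t s : ℝ) : Matrix (Fin 2) (Fin 2) ℂ :=
  expShear (∫ τ in s..t, l τ) (∫ τ in s..t, m τ : ℝ)

/-- `kappa22r a l m t` is `∫ s in realIoo a t, kernel l m t s` by definition. -/
def kernel (l : ℝ → ℂ) (m : ℝ → ℝ) (t s : ℝ) : ℝ :=
  (1 + ∫ τ in s..t, m τ) * Real.exp (∫ τ in s..t, (l τ).re)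

/-- Variation of constants for `x' = [[l, m], [0, l]] x + q`, integrated from `a`. -/
def particularSolution (a : EReal) (l : ℝ → ℂ) (m : ℝ → ℝ) (q : ℝ → Fin 2 → ℂ) (t : ℝ) :
    Fin 2 → ℂ :=
  ∫ s in realIoo a t, transition l m t s *ᵥ q s

/-- A unimodular forcing whose phase cancels that of `exp (∫_s^t l)`: it makes the first
component of `particularSolution` at `t` equal to `κ₂₂(t)`. -/
def phaseForcing (l : ℝ → ℂ) (t s : ℝ) : Fin 2 → ℂ :=
  Complex.exp (-(∫ τ in s..t, l τ).im * Complex.I) • ![1, 1]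

theorem norm_phaseForcing (l : ℝ → ℂ) (t s : ℝ) : ‖phaseForcing l t s‖ = 1 := by
  have h11 : (![1, 1] : Fin 2 → ℂ) = 1 := by ext i; fin_cases i <;> rfl
  rw [phaseForcing, h11, norm_smul, norm_one, mul_one, ← Complex.ofReal_neg,
    Complex.norm_exp_ofReal_mul_I]

theorem transition_self (l : ℝ → ℂ) (m : ℝ → ℝ) (t : ℝ) : transition l m t t = 1 := by
  simp [transition, expShear_zero]

section OrdConnected

variable {I : Set ℝ} (hI : I.OrdConnected) {l : ℝ → ℂ} {m : ℝ → ℝ}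
include hI

theorem transition_mul (hl : ContinuousOn l I) (hm : ContinuousOn m I) {s t u : ℝ}
    (hs : s ∈ I) (ht : t ∈ I) (hu : u ∈ I) :
    transition l m u t * transition l m t s = transition l m u s := by
  have hl' {x y : ℝ} (hx : x ∈ I) (hy : y ∈ I) : IntervalIntegrable l volume x y :=
    (hl.mono (hI.uIcc_subset hx hy)).intervalIntegrable
  have hm' {x y : ℝ} (hx : x ∈ I) (hy : y ∈ I) : IntervalIntegrable m volume x y :=
    (hm.mono (hI.uIcc_subset hx hy)).intervalIntegrable
  rw [transition, transition, transition, expShear_mul, ← Complex.ofReal_add,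
    add_comm (∫ τ in t..u, l τ), add_comm (∫ τ in t..u, m τ),
    intervalIntegral.integral_add_adjacent_intervals (hl' hs ht) (hl' ht hu),
    intervalIntegral.integral_add_adjacent_intervals (hm' hs ht) (hm' ht hu)]

theorem continuousOn_transition_mulVec (hl : ContinuousOn l I) (hm : ContinuousOn m I)
    {t : ℝ} (ht : t ∈ I) {q : ℝ → Fin 2 → ℂ} (hq : ContinuousOn q I) :
    ContinuousOn (fun s => transition l m t s *ᵥ q s) I := by
  have hL := continuousOn_integral_left_of_ordConnected hI hl ht
  have hM := continuousOn_integral_left_of_ordConnected hI hm ht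
  simp only [transition, expShear_mulVec]
  refine continuousOn_pi.2 (Fin.forall_fin_two.2 ⟨?_, ?_⟩) <;>
    simp only [Pi.smul_apply, smul_eq_mul, Matrix.cons_val_zero, Matrix.cons_val_one] <;>
    fun_prop

theorem continuousOn_phaseForcing (hl : ContinuousOn l I) {t : ℝ} (ht : t ∈ I) :
    ContinuousOn (phaseForcing l t) I := by
  have hL := continuousOn_integral_left_of_ordConnected hI hl ht
  unfold phaseForcing
  fun_prop

theorem intervalIntegral_re_of_ordConnected (hl : ContinuousOn l I) {s t : ℝ} (hs : s ∈ I)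
    (ht : t ∈ I) : ∫ τ in s..t, (l τ).re = (∫ τ in s..t, l τ).re := by
  simpa using intervalIntegral.intervalIntegral_re (𝕜 := ℂ) (μ := volume)
    (hl.mono (hI.uIcc_subset hs ht)).intervalIntegrable

theorem intervalIntegral_nonneg_of_ordConnected (hm0 : ∀ t ∈ I, 0 ≤ m t) {s t : ℝ}
    (hs : s ∈ I) (ht : t ∈ I) (hst : s ≤ t) : 0 ≤ ∫ τ in s..t, m τ :=
  intervalIntegral.integral_nonneg hst fun _ hu => hm0 _ (hI.out hs ht hu)

theorem kernel_pos (hm0 : ∀ t ∈ I, 0 ≤ m t) {s t : ℝ} (hs : s ∈ I) (ht : t ∈ I)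
    (hst : s ≤ t) : 0 < kernel l m t s := by
  have := intervalIntegral_nonneg_of_ordConnected hI hm0 hs ht hst
  unfold kernel
  positivity

theorem norm_transition_mulVec_le (hl : ContinuousOn l I) (hm0 : ∀ t ∈ I, 0 ≤ m t)
    {s t : ℝ} (hs : s ∈ I) (ht : t ∈ I) (hst : s ≤ t) (v : Fin 2 → ℂ) :
    ‖transition l m t s *ᵥ v‖ ≤ kernel l m t s * ‖v‖ := by
  rw [kernel, intervalIntegral_re_of_ordConnected hI hl hs ht]
  exact norm_expShear_mulVec_le _ (intervalIntegral_nonneg_of_ordConnected hI hm0 hs ht hst) v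

end OrdConnected

theorem eventually_between_comap_nhdsGT {a b : EReal} (hab : a < b) :
    ∀ᶠ u : ℝ in comap (fun x : ℝ => (x : EReal)) (𝓝[>] a), a < (u : EReal) ∧ (u : EReal) < b :=
  preimage_mem_comap
    (inter_mem self_mem_nhdsWithin (mem_nhdsWithin_of_mem_nhds (Iio_mem_nhds hab)))

theorem neBot_comap_nhdsGT {a b : EReal} (hab : a < b) :
    (comap (fun x : ℝ => (x : EReal)) (𝓝[>] a)).NeBot :=
  comap_neBot fun _ hU => by
    obtain ⟨c, hac, hsub⟩ := (nhdsGT_basis_of_exists_gt ⟨b, hab⟩).mem_iff.1 hU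
    obtain ⟨r, har, hrc⟩ := EReal.exists_between_coe_real hac
    exact ⟨r, hsub ⟨har, hrc⟩⟩

section Between

variable {a b : EReal} {I : Set ℝ} (hI1 : ∀ x : ℝ, a < (x : EReal) → (x : EReal) < b → x ∈ I)
  (hI2 : ∀ x ∈ I, a ≤ (x : EReal) ∧ (x : EReal) ≤ b) {l : ℝ → ℂ} {m : ℝ → ℝ}
  {q : ℝ → Fin 2 → ℂ} {ε : ℝ}
include hI1 hI2

theorem ordConnected_of_between : I.OrdConnected := by
  refine ⟨fun x hx y hy z hz => ?_⟩
  rcases hz.1.eq_or_lt with rfl | hxz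
  · exact hx
  rcases hz.2.eq_or_lt with rfl | hzy
  · exact hy
  exact hI1 z ((hI2 x hx).1.trans_lt (EReal.coe_lt_coe_iff.2 hxz))
    ((EReal.coe_lt_coe_iff.2 hzy).trans_le (hI2 y hy).2)

theorem realIoo_subset_of_between {t : ℝ} (ht : t ∈ I) : realIoo a t ⊆ I :=
  fun s hs => hI1 s hs.1 ((EReal.coe_lt_coe_iff.2 hs.2).trans_le (hI2 t ht).2)

theorem kappa22r_pos (hm0 : ∀ t ∈ I, 0 ≤ m t) {t : ℝ} (ht : t ∈ I) (hat : a < t)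
    (hker : IntegrableOn (kernel l m t) (realIoo a t)) : 0 < kappa22r a l m t := by
  have hpos : ∀ s ∈ realIoo a t, 0 < kernel l m t s := fun s hs =>
    kernel_pos (ordConnected_of_between hI1 hI2) hm0 (realIoo_subset_of_between hI1 hI2 ht hs)
      ht hs.2.le
  obtain ⟨u, hau, hut⟩ := EReal.exists_between_coe_real hat
  have hIoo : Ioo u t ⊆ Function.support (kernel l m t) ∩ realIoo a t := fun s hs =>
    have hs' : s ∈ realIoo a t := ⟨hau.trans (EReal.coe_lt_coe_iff.2 hs.1), hs.2⟩
    ⟨(hpos s hs').ne', hs'⟩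
  refine (setIntegral_pos_iff_support_of_nonneg_ae
    ((ae_restrict_iff' (measurableSet_realIoo a t)).2 (ae_of_all _ fun s hs => (hpos s hs).le))
    hker).2 ((measure_mono hIoo).trans_lt' ?_)
  simpa using EReal.coe_lt_coe_iff.1 hut

theorem ae_norm_transition_mulVec_le (hl : ContinuousOn l I) (hm0 : ∀ t ∈ I, 0 ≤ m t)
    (hqε : ∀ s ∈ I, ‖q s‖ ≤ ε) {t : ℝ} (ht : t ∈ I) :
    ∀ᵐ s ∂volume.restrict (realIoo a t), ‖transition l m t s *ᵥ q s‖ ≤ kernel l m t s * ε := by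
  have hI := ordConnected_of_between hI1 hI2
  refine (ae_restrict_iff' (measurableSet_realIoo a t)).2 (ae_of_all _ fun s hs => ?_)
  have hsI := realIoo_subset_of_between hI1 hI2 ht hs
  calc _ ≤ kernel l m t s * ‖q s‖ := norm_transition_mulVec_le hI hl hm0 hsI ht hs.2.le _
    _ ≤ kernel l m t s * ε := by
      gcongr
      · exact (kernel_pos hI hm0 hsI ht hs.2.le).le
      · exact hqε s hsI

theorem integrableOn_transition_mulVec (hl : ContinuousOn l I) (hm : ContinuousOn m I)
    (hm0 : ∀ t ∈ I, 0 ≤ m t) (hq : ContinuousOn q I) (hqε : ∀ s ∈ I, ‖q s‖ ≤ ε) {t : ℝ}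
    (ht : t ∈ I) (hker : IntegrableOn (kernel l m t) (realIoo a t)) :
    IntegrableOn (fun s => transition l m t s *ᵥ q s) (realIoo a t) :=
  (hker.mul_const ε).mono'
    (((continuousOn_transition_mulVec (ordConnected_of_between hI1 hI2) hl hm ht hq).mono
      (realIoo_subset_of_between hI1 hI2 ht)).aestronglyMeasurable (measurableSet_realIoo a t))
    (ae_norm_transition_mulVec_le hI1 hI2 hl hm0 hqε ht)

theorem norm_particularSolution_le (hl : ContinuousOn l I) (hm0 : ∀ t ∈ I, 0 ≤ m t)
    (hqε : ∀ s ∈ I, ‖q s‖ ≤ ε) {t : ℝ} (ht : t ∈ I)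
    (hker : IntegrableOn (kernel l m t) (realIoo a t)) :
    ‖particularSolution a l m q t‖ ≤ kappa22r a l m t * ε :=
  (norm_integral_le_of_norm_le (hker.mul_const ε)
    (ae_norm_transition_mulVec_le hI1 hI2 hl hm0 hqε ht)).trans_eq (integral_mul_const _ _)

theorem hasDerivWithinAt_particularSolution (hl : ContinuousOn l I) (hm : ContinuousOn m I)
    (hm0 : ∀ t ∈ I, 0 ≤ m t) (hq : ContinuousOn q I) (hqε : ∀ s ∈ I, ‖q s‖ ≤ ε)
    (hker : ∀ t ∈ I, IntegrableOn (kernel l m t) (realIoo a t)) {t : ℝ} (ht : t ∈ I) :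
    HasDerivWithinAt (particularSolution a l m q)
      (!![l t, (m t : ℂ); 0, l t] *ᵥ particularSolution a l m q t + q t) I t := by
  have hI := ordConnected_of_between hI1 hI2
  -- Through `T(u, s) = T(u, t) T(t, s)`, near `t` the solution is the product
  -- `T(u, t) (∫_a^u T(t, s) q(s) ds)` of two factors with known derivatives.
  set g : ℝ → Fin 2 → ℂ := fun s => transition l m t s *ᵥ q s with hg
  have hg_int : ∀ u ∈ I, IntegrableOn g (realIoo a u) := fun u hu =>
    IntegrableOn.congr_fun (integrable_mulVec (transition l m t u)
      (integrableOn_transition_mulVec hI1 hI2 hl hm hm0 hq hqε hu (hker u hu)))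
      (fun s hs => by
        rw [hg, mulVec_mulVec,
          transition_mul hI hl hm (realIoo_subset_of_between hI1 hI2 hu hs) hu ht])
      (measurableSet_realIoo a u)
  have hrepr : ∀ u ∈ I,
      particularSolution a l m q u = transition l m u t *ᵥ ∫ s in realIoo a u, g s := by
    intro u hu
    rw [← integral_mulVec _ (hg_int u hu)]
    refine setIntegral_congr_fun (measurableSet_realIoo a u) fun s hs => ?_
    rw [hg, mulVec_mulVec,
      transition_mul hI hl hm (realIoo_subset_of_between hI1 hI2 hu hs) ht hu]
  have hw := hasDerivWithinAt_setIntegral_realIoo hI (fun u hu => (hI2 u hu).1)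
    (continuousOn_transition_mulVec hI hl hm ht hq) hg_int ht
  have hΛ := hasDerivWithinAt_integral_of_ordConnected hI hl ht ht
  have hM := (hasDerivWithinAt_integral_of_ordConnected hI hm ht ht).ofReal_comp
  refine ((hasDerivWithinAt_expShear_mulVec hΛ hM hw).congr hrepr (hrepr t ht)).congr_deriv ?_
  simp [transition_self, expShear_zero, particularSolution]

theorem particularSolution_phaseForcing_apply_zero (hl : ContinuousOn l I)
    (hm : ContinuousOn m I) (hm0 : ∀ t ∈ I, 0 ≤ m t) {t : ℝ} (ht : t ∈ I)
    (hker : IntegrableOn (kernel l m t) (realIoo a t)) :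
    particularSolution a l m (phaseForcing l t) t 0 = (kappa22r a l m t : ℂ) := by
  have hI := ordConnected_of_between hI1 hI2
  have hint := integrableOn_transition_mulVec hI1 hI2 hl hm hm0
    (continuousOn_phaseForcing hI hl ht) (fun s _ => (norm_phaseForcing l t s).le) ht hker
  rw [particularSolution, eval_integral (Integrable.eval hint)]
  change _ = ((∫ s in realIoo a t, kernel l m t s : ℝ) : ℂ)
  rw [← integral_complex_ofReal]
  refine setIntegral_congr_fun (measurableSet_realIoo a t) fun s hs => ?_
  rw [transition, phaseForcing, expShear_mulVec_phase_zero, kernel,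
    intervalIntegral_re_of_ordConnected hI hl (realIoo_subset_of_between hI1 hI2 ht hs) ht]

theorem eq_zero_of_bounded_homogeneous (hab : a < b) (hl : ContinuousOn l I)
    (hm : ContinuousOn m I)
    (hlim : ∀ t₀ : ℝ, a < (t₀ : EReal) → (t₀ : EReal) < b →
      Tendsto (fun t => ∫ s in t..t₀, (l s).re) (comap (fun x : ℝ => (x : EReal)) (𝓝[>] a))
        atBot)
    {x : ℝ → Fin 2 → ℂ}
    (hx : ∀ t ∈ I, HasDerivWithinAt x (!![l t, (m t : ℂ); 0, l t] *ᵥ x t) I t)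
    {B : ℝ} (hB : ∀ t ∈ I, ‖x t‖ ≤ B) {t : ℝ} (ht : t ∈ I) : x t = 0 := by
  have hI := ordConnected_of_between hI1 hI2
  obtain ⟨t₀, hat₀, ht₀b⟩ := EReal.exists_between_coe_real hab
  have ht₀ : t₀ ∈ I := hI1 t₀ hat₀ ht₀b
  have := neBot_comap_nhdsGT hab
  have hFI : ∀ᶠ u in comap (fun x : ℝ => (x : EReal)) (𝓝[>] a), u ∈ I :=
    (eventually_between_comap_nhdsGT hab).mono fun u hu => hI1 u hu.1 hu.2
  have hΛ : Tendsto (fun u => (∫ τ in t₀..u, l τ).re)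
      (comap (fun x : ℝ => (x : EReal)) (𝓝[>] a)) atTop := by
    refine (tendsto_neg_atBot_atTop.comp (hlim t₀ hat₀ ht₀b)).congr' (hFI.mono fun u hu => ?_)
    show -(∫ s in u..t₀, (l s).re) = (∫ τ in t₀..u, l τ).re
    rw [intervalIntegral_re_of_ordConnected hI hl hu ht₀, intervalIntegral.integral_symm u t₀,
      Complex.neg_re]
  exact eq_zero_of_bounded_solution hI.convex
    (fun u hu => hasDerivWithinAt_integral_of_ordConnected hI hl ht₀ hu)
    (fun u hu => (hasDerivWithinAt_integral_of_ordConnected hI hm ht₀ hu).ofReal_comp) hFI hΛ hx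
    hB ht

end Between

end UlamTriangular

open UlamTriangular in
theorem statement13 (a b : EReal) (hab : a < b) (I : Set ℝ)
    (hI1 : ∀ x : ℝ, a < (x : EReal) → (x : EReal) < b → x ∈ I)
    (hI2 : ∀ x ∈ I, a ≤ (x : EReal) ∧ (x : EReal) ≤ b)
    (l : ℝ → ℂ) (m : ℝ → ℝ) (hl : ContinuousOn l I) (hm : ContinuousOn m I)
    (hm0 : ∀ t ∈ I, 0 ≤ m t)
    (hker : ∀ t ∈ I, IntegrableOn
      (fun s => (1 + ∫ τ in s..t, m τ) * Real.exp (∫ τ in s..t, (l τ).re))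
      {s : ℝ | a < (s : EReal) ∧ s < t})
    (hbdd : BddAbove (kappa22r a l m '' I))
    (hlim : ∀ t₀ : ℝ, a < (t₀ : EReal) → (t₀ : EReal) < b →
        Tendsto (fun t => ∫ s in t..t₀, (l s).re)
          (Filter.comap (fun x : ℝ => (x : EReal)) (nhdsWithin a (Ioi a))) atBot) :
    UlamStable2C I (fun t => !![l t, (m t : ℂ); 0, l t]) (sSup (kappa22r a l m '' I)) ∧
    ∀ K : ℝ, UlamStable2C I (fun t => !![l t, (m t : ℂ); 0, l t]) K → sSup (kappa22r a l m '' I) ≤ K := by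
  set S := sSup (kappa22r a l m '' I)
  have hA := continuousOn_triangular hl hm
  have hκS : ∀ t ∈ I, kappa22r a l m t ≤ S := fun t ht => le_csSup hbdd (mem_image_of_mem _ ht)
  obtain ⟨t₀, hat₀, ht₀b⟩ := EReal.exists_between_coe_real hab
  have ht₀ : t₀ ∈ I := hI1 t₀ hat₀ ht₀b
  have hsol : ∀ (ε : ℝ) (q : ℝ → Fin 2 → ℂ), ContinuousOn q I → (∀ s ∈ I, ‖q s‖ ≤ ε) →
      (∀ t ∈ I, HasDerivWithinAt (particularSolution a l m q)
        (!![l t, (m t : ℂ); 0, l t] *ᵥ particularSolution a l m q t + q t) I t) ∧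
      ∀ t ∈ I, ‖particularSolution a l m q t‖ ≤ S * ε := fun ε q hq hqε =>
    ⟨fun t ht => hasDerivWithinAt_particularSolution hI1 hI2 hl hm hm0 hq hqε hker ht,
      fun t ht => (norm_particularSolution_le hI1 hI2 hl hm0 hqε ht (hker t ht)).trans
        (by gcongr; exacts [(norm_nonneg _).trans (hqε t ht), hκS t ht])⟩
  refine ⟨ulamStable2C_of_exists_solution
    ((kappa22r_pos hI1 hI2 hm0 ht₀ hat₀ (hker t₀ ht₀)).trans_le (hκS t₀ ht₀)) hA
    fun ε _ q hq hqε => ⟨_, hsol ε q hq hqε⟩, fun K hK => csSup_le ⟨_, t₀, ht₀, rfl⟩ ?_⟩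
  rintro _ ⟨t, ht, rfl⟩
  have hq := continuousOn_phaseForcing (ordConnected_of_between hI1 hI2) hl ht
  have hq1 : ∀ s ∈ I, ‖phaseForcing l t s‖ ≤ 1 := fun s _ => (norm_phaseForcing l t s).le
  obtain ⟨hψ, hψS⟩ := hsol 1 _ hq hq1
  calc kappa22r a l m t ≤ ‖particularSolution a l m (phaseForcing l t) t 0‖ := by
        rw [particularSolution_phaseForcing_apply_zero hI1 hI2 hl hm hm0 ht (hker t ht),
          Complex.norm_real, Real.norm_eq_abs]
        exact le_abs_self _
    _ ≤ ‖particularSolution a l m (phaseForcing l t) t‖ := norm_le_pi_norm _ 0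
    _ ≤ K := norm_le_of_ulamStable2C hK hA
      (fun x hx B hB u hu => eq_zero_of_bounded_homogeneous hI1 hI2 hab hl hm hlim hx hB hu)
      hq hq1 hψ hψS ht
end
end

section
/- Let λ ∈ ℂ with Re λ ≠ 0, and let A be the constant 2×2 upper-triangular matrix with diagonal entries λ, λ and upper-right entry 1 (a Jordan block). Then the system x' = Ax is Ulam stable on ℝ with respect to the maximum norm on ℂ², and its best (minimal) Ulam constant is K_{c2} := (|Re λ| + 1)/(Re λ)²; that is, K_{c2} is an Ulam constant for x' = Ax on ℝ and every Ulam constant K for x' = Ax on ℝ satisfies K ≥ K_{c2}. -/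
/-!
Componentwise the Jordan system reads `x₂' = λ x₂`, `x₁' = λ x₁ + x₂`. For `Re λ ≠ 0` the scalar
equation `u' = λ u + g` with continuous `|g| ≤ M` has a solution with `|u| ≤ M / |Re λ|`
(integrate `e^{λ (t - s)} g(s)` from the side where it decays), while `u' = λ u` has no bounded
solution but `0`. Solving for `φ - x` from the second component up bounds it by
`(ε / |Re λ| + ε) / |Re λ| = K_{c2} ε`. Conversely, the oscillation
`φ(t) = e^{i (Im λ) t} (K_{c2}, -1 / Re λ)` has residual of norm exactly `1`, and the only
solution at bounded distance from it is `0`, so every Ulam constant is at least `‖φ 0‖ ≥ K_{c2}`.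
-/

open MeasureTheory Filter Set

noncomputable section

open scoped Complex Matrix

lemma hasDerivAt_cexp_mul_ofReal (l : ℂ) (t : ℝ) :
    HasDerivAt (fun s : ℝ => cexp (l * s)) (l * cexp (l * t)) t := by
  simpa [mul_comm] using ((hasDerivAt_id t).ofReal_comp.const_mul l).cexp

lemma norm_cexp_mul_ofReal (l : ℂ) (t : ℝ) : ‖cexp (l * t)‖ = Real.exp (l.re * t) := by
  simp [Complex.norm_exp]

lemma hasDerivAt_setIntegral_Ioi {E : Type*} [NormedAddCommGroup E] [NormedSpace ℝ E]
    [CompleteSpace E] {F : ℝ → E} (hF : Continuous F) (hint : ∀ t, IntegrableOn F (Ioi t))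
    (t : ℝ) : HasDerivAt (fun s => ∫ x in Ioi s, F x) (-F t) t := by
  have h : (fun s => ∫ x in Ioi s, F x) = fun s => (∫ x in Ioi 0, F x) - ∫ x in 0..s, F x := by
    ext s
    rw [← intervalIntegral.integral_Ioi_sub_Ioi' (hint 0) (hint s), sub_sub_cancel]
  rw [h]
  exact ((intervalIntegral.integral_hasDerivAt_right (hF.intervalIntegrable 0 t)
    (hF.stronglyMeasurableAtFilter _ _) hF.continuousAt).const_sub _)

lemma exists_bounded_solution_of_re_pos {l : ℂ} (hl : 0 < l.re) {g : ℝ → ℂ} (hg : Continuous g)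
    {M : ℝ} (hM : ∀ t, ‖g t‖ ≤ M) :
    ∃ u : ℝ → ℂ, (∀ t, HasDerivAt u (l * u t + g t) t) ∧ ∀ t, ‖u t‖ ≤ M / l.re := by
  set F : ℝ → ℂ := fun s => cexp (-l * s) * g s
  have hFle : ∀ s, ‖F s‖ ≤ M * Real.exp (-l.re * s) := fun s => by
    rw [norm_mul, norm_cexp_mul_ofReal, mul_comm, Complex.neg_re]
    exact mul_le_mul_of_nonneg_right (hM s) (Real.exp_pos _).le
  have hdom : ∀ t, IntegrableOn (fun s => M * Real.exp (-l.re * s)) (Ioi t) := fun t =>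
    (exp_neg_integrableOn_Ioi t hl).const_mul M
  have hFcont : Continuous F := by fun_prop
  have hFint : ∀ t, IntegrableOn F (Ioi t) := fun t =>
    (hdom t).mono' hFcont.aestronglyMeasurable (Eventually.of_forall hFle)
  refine ⟨fun t => -(cexp (l * t) * ∫ s in Ioi t, F s), fun t => ?_, fun t => ?_⟩
  · refine (((hasDerivAt_cexp_mul_ofReal l t).mul
      (hasDerivAt_setIntegral_Ioi hFcont hFint t)).neg).congr_deriv ?_
    have : cexp (l * t) * cexp (-l * t) = 1 := by rw [← Complex.exp_add]; simp
    linear_combination (g t) * this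
  · calc ‖-(cexp (l * t) * ∫ s in Ioi t, F s)‖
        ≤ Real.exp (l.re * t) * ∫ s in Ioi t, M * Real.exp (-l.re * s) := by
          rw [norm_neg, norm_mul, norm_cexp_mul_ofReal]
          gcongr
          exact norm_integral_le_of_norm_le (hdom t) (Eventually.of_forall hFle)
      _ = M / l.re := by
          rw [integral_const_mul, integral_exp_mul_Ioi (by linarith), neg_mul, Real.exp_neg]
          field_simp

lemma exists_bounded_solution {l : ℂ} (hl : l.re ≠ 0) {g : ℝ → ℂ} (hg : Continuous g)
    {M : ℝ} (hM : ∀ t, ‖g t‖ ≤ M) :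
    ∃ u : ℝ → ℂ, (∀ t, HasDerivAt u (l * u t + g t) t) ∧ ∀ t, ‖u t‖ ≤ M / |l.re| := by
  rcases hl.lt_or_gt with hneg | hpos
  · -- time reversal `t ↦ -t` turns `u' = l u + g` into `w' = -l w - g(-·)`
    obtain ⟨w, hw, hwM⟩ := exists_bounded_solution_of_re_pos (l := -l) (by simpa using hneg)
      (g := fun t => -g (-t)) (by fun_prop) (fun t => by simpa using hM (-t))
    refine ⟨fun t => w (-t), fun t => ?_, fun t => ?_⟩
    · have := (hw (-t)).scomp t (hasDerivAt_neg t)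
      simp only [neg_neg, neg_smul, one_smul, neg_add, neg_mul, neg_neg] at this
      exact this
    · simpa [abs_of_neg hneg] using hwM (-t)
  · simpa only [abs_of_pos hpos] using exists_bounded_solution_of_re_pos hpos hg hM

lemma eq_cexp_mul_of_hasDerivAt {l : ℂ} {y : ℝ → ℂ} (hy : ∀ t, HasDerivAt y (l * y t) t)
    (t : ℝ) : y t = cexp (l * t) * y 0 := by
  have hderiv : ∀ s, HasDerivAt (fun s : ℝ => cexp (-l * s) * y s) 0 s := fun s =>
    ((hasDerivAt_cexp_mul_ofReal (-l) s).mul (hy s)).congr_deriv (by ring)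
  have hconst := is_const_of_deriv_eq_zero (fun s => (hderiv s).differentiableAt)
    (fun s => (hderiv s).deriv) t 0
  simp only [Complex.ofReal_zero, mul_zero, Complex.exp_zero, one_mul] at hconst
  rw [← hconst, ← mul_assoc, ← Complex.exp_add]
  simp

lemma eq_zero_of_bounded_of_hasDerivAt {l : ℂ} (hl : l.re ≠ 0) {y : ℝ → ℂ}
    (hy : ∀ t, HasDerivAt y (l * y t) t) {C : ℝ} (hC : ∀ t, ‖y t‖ ≤ C) (t : ℝ) : y t = 0 := by
  have hnorm : ∀ s, ‖y s‖ = Real.exp (l.re * s) * ‖y 0‖ := fun s => by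
    rw [eq_cexp_mul_of_hasDerivAt hy s, norm_mul, norm_cexp_mul_ofReal]
  suffices y 0 = 0 by rw [eq_cexp_mul_of_hasDerivAt hy t, this, mul_zero]
  by_contra hy0
  have hr : 0 < ‖y 0‖ := norm_pos_iff.2 hy0
  -- at `s = C / (‖y 0‖ Re l)` the exponential growth already exceeds `C`
  have hgrowth := Real.add_one_le_exp (C / ‖y 0‖)
  have hs := hC (C / (‖y 0‖ * l.re))
  rw [hnorm, show l.re * (C / (‖y 0‖ * l.re)) = C / ‖y 0‖ by field_simp] at hs
  have : C / ‖y 0‖ + 1 ≤ C / ‖y 0‖ := by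
    calc C / ‖y 0‖ + 1 ≤ Real.exp (C / ‖y 0‖) := hgrowth
      _ ≤ C / ‖y 0‖ := by rwa [le_div_iff₀ hr]
  linarith

lemma jordan_mulVec (l : ℂ) (v : Fin 2 → ℂ) :
    !![l, 1; 0, l] *ᵥ v = ![l * v 0 + v 1, l * v 1] := by
  ext i; fin_cases i <;> simp [Matrix.mulVec, dotProduct, Fin.sum_univ_two]

lemma norm_le_of_fin_two {E : Type*} [SeminormedAddGroup E] {v : Fin 2 → E} {r : ℝ}
    (h0 : ‖v 0‖ ≤ r) (h1 : ‖v 1‖ ≤ r) : ‖v‖ ≤ r :=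
  (pi_norm_le_iff_of_nonneg ((norm_nonneg _).trans h0)).2 (Fin.forall_fin_two.2 ⟨h0, h1⟩)

lemma exists_bounded_jordan_solution {l : ℂ} (hl : l.re ≠ 0) {f : ℝ → Fin 2 → ℂ}
    (hf : Continuous f) {ε : ℝ} (hfε : ∀ t, ‖f t‖ ≤ ε) :
    ∃ u : ℝ → Fin 2 → ℂ, (∀ t, HasDerivAt u (!![l, 1; 0, l] *ᵥ u t + f t) t) ∧
      ∀ t, ‖u t‖ ≤ (|l.re| + 1) / l.re ^ 2 * ε := by
  have hfi : ∀ i t, ‖f t i‖ ≤ ε := fun i t => (norm_le_pi_norm (f t) i).trans (hfε t)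
  obtain ⟨u₂, hu₂, hu₂ε⟩ := exists_bounded_solution hl (g := fun t => f t 1) (by fun_prop) (hfi 1)
  have hu₂c : Continuous u₂ := continuous_iff_continuousAt.2 fun t => (hu₂ t).continuousAt
  obtain ⟨u₁, hu₁, hu₁ε⟩ := exists_bounded_solution hl (g := fun t => u₂ t + f t 0)
    (by fun_prop) (fun t => (norm_add_le _ _).trans (add_le_add (hu₂ε t) (hfi 0 t)))
  have ha : 0 < |l.re| := abs_pos.2 hl
  have hK₁ : (ε / |l.re| + ε) / |l.re| = (|l.re| + 1) / l.re ^ 2 * ε := by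
    rw [← sq_abs]; field_simp; ring
  have hK₂ : ε / |l.re| ≤ (|l.re| + 1) / l.re ^ 2 * ε := by
    have hε : 0 ≤ ε := (norm_nonneg _).trans (hfε 0)
    have hgap : (|l.re| + 1) / l.re ^ 2 * ε - ε / |l.re| = ε / l.re ^ 2 := by
      rw [← sq_abs]; field_simp; ring
    linarith [div_nonneg hε (sq_nonneg l.re)]
  refine ⟨fun t => ![u₁ t, u₂ t], fun t => ?_, fun t => ?_⟩
  · refine hasDerivAt_pi.2 (Fin.forall_fin_two.2 ⟨?_, ?_⟩)
    · refine (hu₁ t).congr_deriv ?_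
      rw [jordan_mulVec]
      simp only [Pi.add_apply, Matrix.cons_val_zero, Matrix.cons_val_one, Matrix.cons_val_fin_one]
      ring
    · exact (hu₂ t).congr_deriv (by rw [jordan_mulVec]; simp)
  · exact norm_le_of_fin_two (by simpa [hK₁] using hu₁ε t) (by simpa using (hu₂ε t).trans hK₂)

lemma eq_zero_of_bounded_jordan_solution {l : ℂ} (hl : l.re ≠ 0) {x : ℝ → Fin 2 → ℂ}
    (hx : ∀ t, HasDerivAt x (!![l, 1; 0, l] *ᵥ x t) t) {C : ℝ} (hC : ∀ t, ‖x t‖ ≤ C)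
    (t : ℝ) : x t = 0 := by
  have hxi : ∀ i s, HasDerivAt (fun s => x s i) ((!![l, 1; 0, l] *ᵥ x s) i) s :=
    fun i s => hasDerivAt_pi.1 (hx s) i
  have hCi : ∀ i s, ‖x s i‖ ≤ C := fun i s => (norm_le_pi_norm (x s) i).trans (hC s)
  have hx₁ : ∀ s, x s 1 = 0 := eq_zero_of_bounded_of_hasDerivAt hl
    (fun s => (hxi 1 s).congr_deriv (by rw [jordan_mulVec]; rfl)) (hCi 1)
  have hx₀ : ∀ s, x s 0 = 0 := eq_zero_of_bounded_of_hasDerivAt hl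
    (fun s => (hxi 0 s).congr_deriv (by rw [jordan_mulVec]; simp [hx₁])) (hCi 0)
  ext i; fin_cases i
  exacts [hx₀ t, hx₁ t]

lemma ulamStable2C_univ_const_iff (A : Matrix (Fin 2) (Fin 2) ℂ) (K : ℝ) :
    UlamStable2C univ (fun _ => A) K ↔ 0 < K ∧ ∀ ε : ℝ, 0 < ε → ∀ φ φd : ℝ → Fin 2 → ℂ,
      (∀ t, HasDerivAt φ (φd t) t) → Continuous φd → (∀ t, ‖φd t - A *ᵥ φ t‖ ≤ ε) →
      ∃ x : ℝ → Fin 2 → ℂ, (∀ t, HasDerivAt x (A *ᵥ x t) t) ∧ ∀ t, ‖φ t - x t‖ ≤ K * ε := by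
  simp only [UlamStable2C, mem_univ, forall_const, hasDerivWithinAt_univ, continuousOn_univ]

theorem ulamStable2C_jordan {l : ℂ} (hl : l.re ≠ 0) :
    UlamStable2C univ (fun _ => !![l, 1; 0, l]) ((|l.re| + 1) / l.re ^ 2) := by
  have ha : 0 < |l.re| := abs_pos.2 hl
  refine (ulamStable2C_univ_const_iff _ _).2 ⟨by rw [← sq_abs]; positivity, ?_⟩
  intro ε _ φ φd hφ hφd hres
  have hφc : Continuous φ := continuous_iff_continuousAt.2 fun t => (hφ t).continuousAt
  obtain ⟨u, hu, huε⟩ := exists_bounded_jordan_solution hl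
    (f := fun t => φd t - !![l, 1; 0, l] *ᵥ φ t) (by fun_prop) hres
  refine ⟨φ - u, fun t => ((hφ t).sub (hu t)).congr_deriv ?_, fun t => by simpa using huε t⟩
  simp only [Pi.sub_apply, Matrix.mulVec_sub]
  abel

lemma jordan_smul_residual (a b : ℝ) (ha : a ≠ 0) (z : ℂ) :
    (b * Complex.I * z) • ![(((|a| + 1) / a ^ 2 : ℝ) : ℂ), -(a : ℂ)⁻¹] -
      !![a + b * Complex.I, 1; 0, a + b * Complex.I] *ᵥ
        (z • ![(((|a| + 1) / a ^ 2 : ℝ) : ℂ), -(a : ℂ)⁻¹]) =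
      z • ![((-(|a| / a) : ℝ) : ℂ), 1] := by
  have ha' : (a : ℂ) ≠ 0 := Complex.ofReal_ne_zero.2 ha
  rw [Matrix.mulVec_smul, jordan_mulVec]
  ext i; fin_cases i <;>
    simp only [Pi.sub_apply, Pi.smul_apply, smul_eq_mul, Matrix.cons_val_zero,
      Matrix.cons_val_one, Matrix.cons_val_fin_one] <;> push_cast <;> field_simp <;> ring

theorem le_of_ulamStable2C_jordan {l : ℂ} (hl : l.re ≠ 0) {K : ℝ}
    (hK : UlamStable2C univ (fun _ => !![l, 1; 0, l]) K) : (|l.re| + 1) / l.re ^ 2 ≤ K := by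
  set w : Fin 2 → ℂ := ![(((|l.re| + 1) / l.re ^ 2 : ℝ) : ℂ), -(l.re : ℂ)⁻¹]
  set e : ℝ → ℂ := fun t => cexp (l.im * Complex.I * t)
  have he : ∀ t, HasDerivAt e (l.im * Complex.I * e t) t := hasDerivAt_cexp_mul_ofReal _
  have he₁ : ∀ t, ‖e t‖ = 1 := fun t => by simp [e, norm_cexp_mul_ofReal]
  have hres : ∀ t, ‖(l.im * Complex.I * e t) • w - !![l, 1; 0, l] *ᵥ (e t • w)‖ ≤ 1 := by
    intro t
    have := jordan_smul_residual l.re l.im hl (e t)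
    rw [Complex.re_add_im] at this
    rw [this, norm_smul, he₁, one_mul]
    refine norm_le_of_fin_two ?_ (by simp)
    simp [div_self (abs_ne_zero.2 hl)]
  obtain ⟨x, hx, hxK⟩ := ((ulamStable2C_univ_const_iff _ _).1 hK).2 1 one_pos (fun t => e t • w) _
    (fun t => (he t).smul_const w) (by fun_prop) hres
  have hx₀ : ∀ t, x t = 0 := eq_zero_of_bounded_jordan_solution hl hx (C := ‖w‖ + K * 1)
    fun t => calc ‖x t‖ ≤ ‖e t • w‖ + ‖e t • w - x t‖ := norm_le_insert _ _
      _ ≤ ‖w‖ + K * 1 := by rw [norm_smul, he₁, one_mul]; gcongr; exact hxK t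
  calc (|l.re| + 1) / l.re ^ 2 = ‖w 0‖ := by
        rw [show w 0 = (((|l.re| + 1) / l.re ^ 2 : ℝ) : ℂ) from rfl, Complex.norm_real,
          Real.norm_of_nonneg (by positivity)]
    _ ≤ ‖w‖ := norm_le_pi_norm w 0
    _ = ‖e 0 • w - x 0‖ := by rw [hx₀, sub_zero, norm_smul, he₁, one_mul]
    _ ≤ K := by simpa using hxK 0

theorem statement14 (l : ℂ) (h : l.re ≠ 0) :
    UlamStable2C Set.univ (fun _ => !![l, 1; 0, l]) ((|l.re| + 1) / (l.re) ^ 2) ∧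
    ∀ K : ℝ, UlamStable2C Set.univ (fun _ => !![l, 1; 0, l]) K →
      (|l.re| + 1) / (l.re) ^ 2 ≤ K :=
  ⟨ulamStable2C_jordan h, fun _ hK => le_of_ulamStable2C_jordan h hK⟩
end
end

section
/- Let −∞ ≤ a < b ≤ ∞ and let I be one of the intervals (a,b), (a,b], [a,b), [a,b]. Let α, β : I → ℝ be continuous and let A(t) be the 2×2 real matrix with rows (α(t), β(t)) and (−β(t), α(t)). Suppose that κ₃₂(t) := ∫_a^t e^{∫_s^t α(τ) dτ} ds exists (as a finite, possibly improper, integral) for all t ∈ I, and that K₃₂ := sup_{t∈I} κ₃₂(t) < ∞. Then the system x' = A(t)x is Ulam stable on I with Ulam constant K₃₂ (with respect to the Euclidean norm on ℝ²). Furthermore, if in addition lim_{t→a⁺} ∫_t^{t₀} α(s) ds = −∞ for t₀ ∈ (a,b), then for every ε > 0 and every continuously differentiable φ : I → ℝ² with sup_{t∈I} ‖φ'(t) − A(t)φ(t)‖₂ ≤ ε, there exists a unique solution x of x' = A(t)x satisfying sup_{t∈I} ‖φ(t) − x(t)‖₂ ≤ K₃₂ε. -/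
/-
Identify `ℝ²` with `ℂ` via `v ↦ v₀ + v₁ i`. The Euclidean norm becomes the modulus and the matrix
with rows `(α, β)`, `(-β, α)` acts as multiplication by `λ = α - β i`, so the system is the scalar
equation `z' = λ z`. If `G` is a primitive of `λ` and `q = φ' - λ φ`, variation of constants gives
the solution `x(t) = φ(t) - ∫_a^t e^{G(t) - G(s)} q(s) ds`, and `|e^{G(t) - G(s)}| = e^{∫_s^t α}`
yields `|φ(t) - x(t)| ≤ κ₃₂(t) ε`. Two solutions that both stay within bounded distance of `φ`
differ by `e^{G(t)} c`, of modulus `e^{∫_{t₀}^t α} |c|`; if `∫_t^{t₀} α → -∞` as `t → a⁺` this is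
unbounded unless `c = 0`.
-/

open MeasureTheory Filter Set

noncomputable section

/-- The Euclidean norm `√(v₁² + v₂²)` on `ℝ²`. -/
def enorm2 (v : Fin 2 → ℝ) : ℝ := Real.sqrt ((v 0) ^ 2 + (v 1) ^ 2)

/-- Ulam stability on `I` with constant `K` for the system `x' = A(t) x` on `ℝ²`,
with respect to the Euclidean norm. -/
def UlamStable2R (I : Set ℝ) (A : ℝ → Matrix (Fin 2) (Fin 2) ℝ) (K : ℝ) : Prop :=
  0 < K ∧
  ∀ ε : ℝ, 0 < ε →
    ∀ φ φd : ℝ → Fin 2 → ℝ,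
      (∀ t ∈ I, HasDerivWithinAt φ (φd t) I t) →
      ContinuousOn φd I →
      (∀ t ∈ I, enorm2 (φd t - (A t).mulVec (φ t)) ≤ ε) →
      ∃ x : ℝ → Fin 2 → ℝ,
        (∀ t ∈ I, HasDerivWithinAt x ((A t).mulVec (x t)) I t) ∧
        ∀ t ∈ I, enorm2 (φ t - x t) ≤ K * ε

/-- `κ₃₂(t) = ∫_a^t exp(∫_s^t α) ds`. -/
def kappa32 (a : EReal) (al : ℝ → ℝ) (t : ℝ) : ℝ :=
  ∫ s in {s : ℝ | a < (s : EReal) ∧ s < t}, Real.exp (∫ τ in s..t, al τ)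

open Topology

theorem ordConnected_of_ereal_bounds {a b : EReal} {I : Set ℝ}
    (hI1 : ∀ x : ℝ, a < (x : EReal) → (x : EReal) < b → x ∈ I)
    (hI2 : ∀ x ∈ I, a ≤ (x : EReal) ∧ (x : EReal) ≤ b) : I.OrdConnected := by
  refine ⟨fun x hx y hy z hz => ?_⟩
  rcases eq_or_lt_of_le hz.1 with rfl | hxz
  · exact hx
  rcases eq_or_lt_of_le hz.2 with rfl | hzy
  · exact hy
  exact hI1 z ((hI2 x hx).1.trans_lt (EReal.coe_lt_coe_iff.2 hxz))
    ((EReal.coe_lt_coe_iff.2 hzy).trans_le (hI2 y hy).2)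

theorem setOf_ereal_lt_and_lt_subset {a b : EReal} {I : Set ℝ}
    (hI1 : ∀ x : ℝ, a < (x : EReal) → (x : EReal) < b → x ∈ I)
    (hI2 : ∀ x ∈ I, a ≤ (x : EReal) ∧ (x : EReal) ≤ b) {t : ℝ} (ht : t ∈ I) :
    {s : ℝ | a < (s : EReal) ∧ s < t} ⊆ I :=
  fun s hs => hI1 s hs.1 ((EReal.coe_lt_coe_iff.2 hs.2).trans_le (hI2 t ht).2)

theorem measurableSet_setOf_ereal_lt_and_lt (a : EReal) (t : ℝ) :
    MeasurableSet {s : ℝ | a < (s : EReal) ∧ s < t} :=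
  (measurableSet_lt measurable_const measurable_coe_real_ereal).inter measurableSet_Iio

theorem neBot_comap_coe_nhdsGT {a b : EReal} (hab : a < b) :
    (comap (fun x : ℝ => (x : EReal)) (𝓝[>] a)).NeBot :=
  comap_neBot_iff.2 fun S hS => by
    obtain ⟨u, hau, hS⟩ := (mem_nhdsGT_iff_exists_Ioo_subset' hab).1 hS
    obtain ⟨x, hax, hxu⟩ := EReal.exists_between_coe_real hau
    exact ⟨x, hS ⟨hax, hxu⟩⟩

theorem eventually_mem_of_ereal_bounds {a b : EReal} (hab : a < b) {I : Set ℝ}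
    (hI1 : ∀ x : ℝ, a < (x : EReal) → (x : EReal) < b → x ∈ I) :
    ∀ᶠ t in comap (fun x : ℝ => (x : EReal)) (𝓝[>] a), t ∈ I :=
  eventually_of_mem (preimage_mem_comap (Ioo_mem_nhdsGT hab)) fun t ht => hI1 t ht.1 ht.2

theorem Set.OrdConnected.hasDerivWithinAt_integral {E : Type*} [NormedAddCommGroup E]
    [NormedSpace ℝ E] [CompleteSpace E] {f : ℝ → E} {I : Set ℝ} (hI : I.OrdConnected)
    (hf : ContinuousOn f I) {t₀ t : ℝ} (ht₀ : t₀ ∈ I) (ht : t ∈ I) :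
    HasDerivWithinAt (fun u => ∫ x in t₀..u, f x) (f t) I t := by
  have : TendstoIxxClass Ioc (𝓟 I) (𝓟 I) :=
    tendstoIxxClass_principal.2 fun _ hx _ hy => Ioc_subset_Icc_self.trans (hI.out hx hy)
  have : (𝓝[I] t).IsMeasurablyGenerated := hI.measurableSet.nhdsWithin_isMeasurablyGenerated _
  have : intervalIntegral.FTCFilter t (𝓝[I] t) (𝓝[I] t) :=
    { pure_le := pure_le_nhdsWithin ht
      le_nhds := inf_le_left }
  exact intervalIntegral.integral_hasDerivWithinAt_right
    ((hf.mono (hI.uIcc_subset ht₀ ht)).intervalIntegrable)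
    (hf.stronglyMeasurableAtFilter_nhdsWithin hI.measurableSet t) (hf t ht)

section ImproperIntegral

variable {E : Type*} [NormedAddCommGroup E] [NormedSpace ℝ E] {f : ℝ → E} {a : EReal}

theorem setIntegral_ereal_lt_and_lt_eq_add {u v : ℝ} (hau : a ≤ u) (huv : u ≤ v)
    (hf : IntegrableOn f {s : ℝ | a < (s : EReal) ∧ s < v}) :
    ∫ s in {s : ℝ | a < (s : EReal) ∧ s < v}, f s =
      (∫ s in {s : ℝ | a < (s : EReal) ∧ s < u}, f s) + ∫ s in u..v, f s := by
  rw [← integral_inter_add_sdiff (measurableSet_Iio (a := u)) hf,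
    intervalIntegral.integral_of_le huv, integral_Ioc_eq_integral_Ioo]
  have hlow : {s : ℝ | a < (s : EReal) ∧ s < v} ∩ Iio u = {s : ℝ | a < (s : EReal) ∧ s < u} := by
    ext s
    simp only [mem_inter_iff, mem_ofPred_eq, mem_Iio]
    exact ⟨fun h => ⟨h.1.1, h.2⟩, fun h => ⟨⟨h.1, h.2.trans_le huv⟩, h.2⟩⟩
  -- the two sets differ at most at the left endpoint `u`, where `a = u` is possible
  have hup : {s : ℝ | a < (s : EReal) ∧ s < v} \ Iio u =ᵐ[volume] Ioo u v := by
    refine ae_eq_set.2 ⟨measure_mono_null (fun s hs => ?_) (measure_singleton u), ?_⟩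
    · obtain ⟨⟨⟨-, hsv⟩, hus⟩, hs⟩ := hs
      exact le_antisymm (not_lt.1 fun h => hs ⟨h, hsv⟩) (not_lt.1 hus)
    · convert measure_empty (μ := volume)
      refine sdiff_eq_empty.2 fun s hs => ⟨⟨?_, hs.2⟩, not_lt.2 hs.1.le⟩
      exact hau.trans_lt (EReal.coe_lt_coe_iff.2 hs.1)
  rw [hlow]
  congr 1
  exact setIntegral_congr_set hup

theorem hasDerivWithinAt_setIntegral_ereal_lt_and_lt [CompleteSpace E] {I : Set ℝ}
    (hI : I.OrdConnected) (ha : ∀ t ∈ I, a ≤ (t : EReal)) (hf : ContinuousOn f I)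
    (hfi : ∀ t ∈ I, IntegrableOn f {s : ℝ | a < (s : EReal) ∧ s < t}) {t : ℝ} (ht : t ∈ I) :
    HasDerivWithinAt (fun u => ∫ s in {s : ℝ | a < (s : EReal) ∧ s < u}, f s) (f t) I t := by
  have hsplit : ∀ u ∈ I, ∫ s in {s : ℝ | a < (s : EReal) ∧ s < u}, f s =
      (∫ s in {s : ℝ | a < (s : EReal) ∧ s < t}, f s) + ∫ s in t..u, f s := by
    intro u hu
    rcases le_total t u with htu | hut
    · exact setIntegral_ereal_lt_and_lt_eq_add (ha t ht) htu (hfi u hu)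
    · rw [setIntegral_ereal_lt_and_lt_eq_add (ha u hu) hut (hfi t ht),
        intervalIntegral.integral_symm t u]
      abel
  exact ((hI.hasDerivWithinAt_integral hf ht ht).const_add _).congr hsplit (hsplit t ht)

end ImproperIntegral

theorem integrableOn_and_norm_setIntegral_le {α E : Type*} [MeasurableSpace α]
    [NormedAddCommGroup E] [NormedSpace ℝ E] {μ : Measure α} {S : Set α} (hS : MeasurableSet S)
    {g : α → E} {ρ : α → ℝ} {ε : ℝ} (hg : AEStronglyMeasurable g (μ.restrict S))
    (hρ : IntegrableOn ρ S μ) (hle : ∀ s ∈ S, ‖g s‖ ≤ ρ s * ε) :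
    IntegrableOn g S μ ∧ ‖∫ s in S, g s ∂μ‖ ≤ (∫ s in S, ρ s ∂μ) * ε := by
  have hbound : ∀ᵐ s ∂μ.restrict S, ‖g s‖ ≤ ρ s * ε := (ae_restrict_iff' hS).2 (ae_of_all _ hle)
  refine ⟨(hρ.mul_const ε).mono' hg hbound, ?_⟩
  rw [← integral_mul_const]
  exact norm_integral_le_of_norm_le (hρ.mul_const ε) hbound

theorem kappa32_pos {a : EReal} {al : ℝ → ℝ} {t : ℝ} (hat : a < t)
    (hker : IntegrableOn (fun s => Real.exp (∫ τ in s..t, al τ))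
      {s : ℝ | a < (s : EReal) ∧ s < t}) :
    0 < kappa32 a al t := by
  obtain ⟨r, har, hrt⟩ := EReal.exists_between_coe_real hat
  have hIoo : Ioo r t ⊆ {s : ℝ | a < (s : EReal) ∧ s < t} := fun s hs =>
    ⟨har.trans (EReal.coe_lt_coe_iff.2 hs.1), hs.2⟩
  have : NeZero (volume.restrict {s : ℝ | a < (s : EReal) ∧ s < t}) := by
    refine ⟨fun h => ?_⟩
    have := measure_mono_null hIoo (Measure.restrict_eq_zero.1 h)
    rw [Real.volume_Ioo, ENNReal.ofReal_eq_zero, sub_nonpos] at this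
    exact (EReal.coe_lt_coe_iff.1 hrt).not_ge this
  exact integral_exp_pos hker

theorem norm_cexp_intervalIntegral {lam : ℝ → ℂ} {s t : ℝ}
    (hlam : IntervalIntegrable lam volume s t) :
    ‖Complex.exp (∫ τ in s..t, lam τ)‖ = Real.exp (∫ τ in s..t, (lam τ).re) := by
  rw [Complex.norm_exp, ← Complex.reCLM_apply, ← Complex.reCLM.intervalIntegral_comp_comm hlam]
  rfl

theorem hasDerivWithinAt_sub_cexp_mul {f G W : ℝ → ℂ} {f' lam : ℂ} {s : Set ℝ} {t : ℝ}
    (hf : HasDerivWithinAt f f' s t) (hG : HasDerivWithinAt G lam s t)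
    (hW : HasDerivWithinAt W (Complex.exp (-G t) * (f' - lam * f t)) s t) :
    HasDerivWithinAt (fun u => f u - Complex.exp (G u) * W u)
      (lam * (f t - Complex.exp (G t) * W t)) s t := by
  refine (hf.sub (hG.cexp.mul hW)).congr_deriv ?_
  rw [← mul_assoc, ← Complex.exp_add, add_neg_cancel, Complex.exp_zero]
  ring

section LinearScalarEquation

variable {I : Set ℝ} {lam : ℝ → ℂ}

theorem Set.OrdConnected.norm_cexp_integral_sub (hI : I.OrdConnected) (hlam : ContinuousOn lam I)
    {t₀ s t : ℝ} (ht₀ : t₀ ∈ I) (hs : s ∈ I) (ht : t ∈ I) :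
    ‖Complex.exp ((∫ τ in t₀..t, lam τ) - ∫ τ in t₀..s, lam τ)‖ =
      Real.exp (∫ τ in s..t, (lam τ).re) := by
  have hii : ∀ {u v}, u ∈ I → v ∈ I → IntervalIntegrable lam volume u v := fun hu hv =>
    (hlam.mono (hI.uIcc_subset hu hv)).intervalIntegrable
  rw [intervalIntegral.integral_interval_sub_left (hii ht₀ ht) (hii ht₀ hs),
    norm_cexp_intervalIntegral (hii hs ht)]

theorem Set.OrdConnected.eq_cexp_integral_mul {w : ℝ → ℂ} (hI : I.OrdConnected)
    (hlam : ContinuousOn lam I) (hw : ∀ t ∈ I, HasDerivWithinAt w (lam t * w t) I t)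
    {t₀ t : ℝ} (ht₀ : t₀ ∈ I) (ht : t ∈ I) :
    w t = Complex.exp (∫ τ in t₀..t, lam τ) * w t₀ := by
  set G : ℝ → ℂ := fun u => ∫ τ in t₀..u, lam τ
  have hderiv : ∀ u ∈ I, HasDerivWithinAt (fun u => Complex.exp (-G u) * w u) 0 I u := by
    intro u hu
    refine (((hI.hasDerivWithinAt_integral hlam ht₀ hu).neg.cexp).mul (hw u hu)).congr_deriv ?_
    ring
  have hconst := hI.convex.norm_image_sub_le_of_norm_hasDerivWithin_le hderiv
    (fun _ _ => norm_zero.le) ht₀ ht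
  rw [zero_mul, norm_le_zero_iff, sub_eq_zero] at hconst
  simp only [G, intervalIntegral.integral_same, neg_zero, Complex.exp_zero, one_mul] at hconst
  rw [← hconst, ← mul_assoc, ← Complex.exp_add, add_neg_cancel, Complex.exp_zero, one_mul]

theorem Set.OrdConnected.eqOn_zero_of_norm_le {w : ℝ → ℂ} {L : Filter ℝ} [L.NeBot]
    (hI : I.OrdConnected) (hlam : ContinuousOn lam I)
    (hw : ∀ t ∈ I, HasDerivWithinAt w (lam t * w t) I t) {t₀ : ℝ} (ht₀ : t₀ ∈ I)
    (hLI : ∀ᶠ t in L, t ∈ I) (hL : Tendsto (fun t => ∫ τ in t₀..t, (lam τ).re) L atTop)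
    {M : ℝ} (hM : ∀ t ∈ I, ‖w t‖ ≤ M) : EqOn w 0 I := by
  have hnorm : ∀ t ∈ I, ‖w t‖ = Real.exp (∫ τ in t₀..t, (lam τ).re) * ‖w t₀‖ := fun t ht => by
    rw [hI.eq_cexp_integral_mul hlam hw ht₀ ht, norm_mul, norm_cexp_intervalIntegral
      (hlam.mono (hI.uIcc_subset ht₀ ht)).intervalIntegrable]
  have hw₀ : w t₀ = 0 := by
    by_contra hne
    have hgrow := (Real.tendsto_exp_atTop.comp hL).atTop_mul_const (norm_pos_iff.2 hne)
    obtain ⟨t, ht, hMt⟩ := (hLI.and (hgrow.eventually_gt_atTop M)).exists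
    exact (hM t ht).not_gt (hnorm t ht ▸ hMt)
  intro t ht
  rw [hI.eq_cexp_integral_mul hlam hw ht₀ ht, hw₀, mul_zero, Pi.zero_apply]

theorem Set.OrdConnected.exists_hasDerivWithinAt_norm_sub_le {a : EReal} (hI : I.OrdConnected)
    (hne : I.Nonempty) (ha : ∀ t ∈ I, a ≤ (t : EReal))
    (hsub : ∀ t ∈ I, {s : ℝ | a < (s : EReal) ∧ s < t} ⊆ I) (hlam : ContinuousOn lam I)
    (hker : ∀ t ∈ I, IntegrableOn (fun s => Real.exp (∫ τ in s..t, (lam τ).re))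
      {s : ℝ | a < (s : EReal) ∧ s < t})
    {f f' : ℝ → ℂ} (hf : ∀ t ∈ I, HasDerivWithinAt f (f' t) I t) (hf' : ContinuousOn f' I)
    {ε : ℝ} (hε : ∀ t ∈ I, ‖f' t - lam t * f t‖ ≤ ε) :
    ∃ z : ℝ → ℂ, (∀ t ∈ I, HasDerivWithinAt z (lam t * z t) I t) ∧
      ∀ t ∈ I, ‖f t - z t‖ ≤ kappa32 a (fun τ => (lam τ).re) t * ε := by
  obtain ⟨t₀, ht₀⟩ := hne
  set G : ℝ → ℂ := fun u => ∫ τ in t₀..u, lam τ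
  have hG : ∀ t ∈ I, HasDerivWithinAt G (lam t) I t := fun t ht =>
    hI.hasDerivWithinAt_integral hlam ht₀ ht
  have hGc : ContinuousOn G I := fun t ht => (hG t ht).continuousWithinAt
  set q : ℝ → ℂ := fun s => f' s - lam s * f s
  have hqc : ContinuousOn q I := hf'.sub (hlam.mul fun t ht => (hf t ht).continuousWithinAt)
  have hk : ∀ t ∈ I,
      IntegrableOn (fun s => Complex.exp (G t - G s) * q s) {s : ℝ | a < (s : EReal) ∧ s < t} ∧
      ‖∫ s in {s : ℝ | a < (s : EReal) ∧ s < t}, Complex.exp (G t - G s) * q s‖ ≤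
        kappa32 a (fun τ => (lam τ).re) t * ε := fun t ht =>
    integrableOn_and_norm_setIntegral_le (measurableSet_setOf_ereal_lt_and_lt a t)
      ((((continuousOn_const.sub hGc).cexp.mul hqc).mono (hsub t ht)).aestronglyMeasurable
        (measurableSet_setOf_ereal_lt_and_lt a t)) (hker t ht) fun s hs => by
      rw [norm_mul, hI.norm_cexp_integral_sub hlam ht₀ (hsub t ht hs) ht]
      exact mul_le_mul_of_nonneg_left (hε s (hsub t ht hs)) (Real.exp_nonneg _)
  set h : ℝ → ℂ := fun s => Complex.exp (-G s) * q s
  have hhc : ContinuousOn h I := hGc.neg.cexp.mul hqc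
  have hh : ∀ t s, Complex.exp (G t) * h s = Complex.exp (G t - G s) * q s := fun t s => by
    simp only [h, ← mul_assoc, ← Complex.exp_add, ← sub_eq_add_neg]
  have hhi : ∀ t ∈ I, IntegrableOn h {s : ℝ | a < (s : EReal) ∧ s < t} := fun t ht => by
    have := (hk t ht).1.const_mul (Complex.exp (-G t))
    simp only [← hh t, ← mul_assoc, ← Complex.exp_add, neg_add_cancel, Complex.exp_zero,
      one_mul] at this
    exact this
  refine ⟨_, fun t ht => hasDerivWithinAt_sub_cexp_mul (hf t ht) (hG t ht)
    (hasDerivWithinAt_setIntegral_ereal_lt_and_lt hI ha hhc hhi ht), fun t ht => ?_⟩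
  rw [sub_sub_cancel, ← integral_const_mul]
  simpa only [hh t] using (hk t ht).2

end LinearScalarEquation

def toComplex : (Fin 2 → ℝ) ≃L[ℝ] ℂ := Complex.basisOneI.equivFun.symm.toContinuousLinearEquiv

theorem toComplex_apply (v : Fin 2 → ℝ) : toComplex v = v 0 + v 1 * Complex.I := by
  simp [toComplex, Module.Basis.equivFun_symm_apply, Fin.sum_univ_two, Complex.coe_basisOneI]

theorem enorm2_eq_norm_toComplex (v : Fin 2 → ℝ) : enorm2 v = ‖toComplex v‖ := by
  simp [enorm2, toComplex_apply, Complex.norm_def, Complex.normSq_apply, sq]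

theorem toComplex_mulVec (c d : ℝ) (v : Fin 2 → ℝ) :
    toComplex ((!![c, d; -d, c]).mulVec v) = (c - d * Complex.I) * toComplex v := by
  apply Complex.ext <;> simp [toComplex_apply, Matrix.vecHead, Matrix.vecTail]
  ring

theorem hasDerivWithinAt_toComplex_comp_iff {x : ℝ → Fin 2 → ℝ} {v : Fin 2 → ℝ} {s : Set ℝ}
    {t : ℝ} : HasDerivWithinAt (fun u => toComplex (x u)) (toComplex v) s t ↔
      HasDerivWithinAt x v s t :=
  ⟨fun h => by simpa [Function.comp_def] using toComplex.symm.hasFDerivAt.comp_hasDerivWithinAt t h,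
    fun h => toComplex.hasFDerivAt.comp_hasDerivWithinAt t h⟩

theorem hasDerivWithinAt_mulVec_iff {x : ℝ → Fin 2 → ℝ} {c d : ℝ} {s : Set ℝ} {t : ℝ} :
    HasDerivWithinAt x ((!![c, d; -d, c]).mulVec (x t)) s t ↔
      HasDerivWithinAt (fun u => toComplex (x u)) ((c - d * Complex.I) * toComplex (x t)) s t := by
  rw [← toComplex_mulVec, hasDerivWithinAt_toComplex_comp_iff]

theorem exists_solution_enorm2_sub_le {a b : EReal} (hab : a < b) {I : Set ℝ}
    (hI1 : ∀ x : ℝ, a < (x : EReal) → (x : EReal) < b → x ∈ I)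
    (hI2 : ∀ x ∈ I, a ≤ (x : EReal) ∧ (x : EReal) ≤ b)
    {al be : ℝ → ℝ} (hal : ContinuousOn al I) (hbe : ContinuousOn be I)
    (hker : ∀ t ∈ I, IntegrableOn
      (fun s => Real.exp (∫ τ in s..t, al τ)) {s : ℝ | a < (s : EReal) ∧ s < t})
    {ε : ℝ} {φ φd : ℝ → Fin 2 → ℝ} (hφ : ∀ t ∈ I, HasDerivWithinAt φ (φd t) I t)
    (hφd : ContinuousOn φd I)
    (hq : ∀ t ∈ I, enorm2 (φd t - (!![al t, be t; -(be t), al t]).mulVec (φ t)) ≤ ε) :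
    ∃ x : ℝ → Fin 2 → ℝ,
      (∀ t ∈ I, HasDerivWithinAt x ((!![al t, be t; -(be t), al t]).mulVec (x t)) I t) ∧
      ∀ t ∈ I, enorm2 (φ t - x t) ≤ kappa32 a al t * ε := by
  obtain ⟨t₀, hat₀, ht₀b⟩ := EReal.exists_between_coe_real hab
  have hlam : ContinuousOn (fun t => (al t : ℂ) - be t * Complex.I) I := by fun_prop
  obtain ⟨z, hz, hbound⟩ :=
    (ordConnected_of_ereal_bounds hI1 hI2).exists_hasDerivWithinAt_norm_sub_le
      ⟨t₀, hI1 t₀ hat₀ ht₀b⟩ (fun t ht => (hI2 t ht).1)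
      (fun t ht => setOf_ereal_lt_and_lt_subset hI1 hI2 ht) hlam (by simpa using hker)
      (fun t ht => hasDerivWithinAt_toComplex_comp_iff.2 (hφ t ht))
      (toComplex.continuous.comp_continuousOn hφd)
      fun t ht => by simpa only [enorm2_eq_norm_toComplex, map_sub, toComplex_mulVec] using hq t ht
  refine ⟨fun t => toComplex.symm (z t),
    fun t ht => hasDerivWithinAt_mulVec_iff.2 (by simpa using hz t ht), fun t ht => ?_⟩
  simpa [enorm2_eq_norm_toComplex] using hbound t ht

theorem eqOn_of_enorm2_sub_le {a b : EReal} (hab : a < b) {I : Set ℝ}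
    (hI1 : ∀ x : ℝ, a < (x : EReal) → (x : EReal) < b → x ∈ I)
    (hI2 : ∀ x ∈ I, a ≤ (x : EReal) ∧ (x : EReal) ≤ b)
    {al be : ℝ → ℝ} (hal : ContinuousOn al I) (hbe : ContinuousOn be I)
    (hlim : ∀ t₀ : ℝ, a < (t₀ : EReal) → (t₀ : EReal) < b →
      Tendsto (fun t => ∫ s in t..t₀, al s) (comap (fun x : ℝ => (x : EReal)) (𝓝[>] a)) atBot)
    {x y φ : ℝ → Fin 2 → ℝ}
    (hx : ∀ t ∈ I, HasDerivWithinAt x ((!![al t, be t; -(be t), al t]).mulVec (x t)) I t)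
    (hy : ∀ t ∈ I, HasDerivWithinAt y ((!![al t, be t; -(be t), al t]).mulVec (y t)) I t)
    {C : ℝ} (hxφ : ∀ t ∈ I, enorm2 (φ t - x t) ≤ C) (hyφ : ∀ t ∈ I, enorm2 (φ t - y t) ≤ C) :
    EqOn y x I := by
  obtain ⟨t₀, hat₀, ht₀b⟩ := EReal.exists_between_coe_real hab
  have := neBot_comap_coe_nhdsGT hab
  have hlam : ContinuousOn (fun t => (al t : ℂ) - be t * Complex.I) I := by fun_prop
  have hw : ∀ t ∈ I, HasDerivWithinAt (fun u => toComplex (y u - x u))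
      ((al t - be t * Complex.I) * toComplex (y t - x t)) I t := fun t ht =>
    hasDerivWithinAt_mulVec_iff.1 (by rw [Matrix.mulVec_sub]; exact (hy t ht).sub (hx t ht))
  have hgrow : Tendsto (fun t => ∫ τ in t₀..t, al τ)
      (comap (fun x : ℝ => (x : EReal)) (𝓝[>] a)) atTop :=
    (tendsto_neg_atBot_atTop.comp (hlim t₀ hat₀ ht₀b)).congr fun t =>
      (intervalIntegral.integral_symm t t₀).symm
  have hzero := (ordConnected_of_ereal_bounds hI1 hI2).eqOn_zero_of_norm_le hlam hw
    (hI1 t₀ hat₀ ht₀b) (eventually_mem_of_ereal_bounds hab hI1) (by simpa using hgrow)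
    (M := C + C) fun t ht => by
      rw [← sub_sub_sub_cancel_left (x t) (y t) (φ t), map_sub]
      calc ‖toComplex (φ t - x t) - toComplex (φ t - y t)‖
          ≤ enorm2 (φ t - x t) + enorm2 (φ t - y t) := by
            rw [enorm2_eq_norm_toComplex, enorm2_eq_norm_toComplex]
            exact norm_sub_le _ _
        _ ≤ C + C := add_le_add (hxφ t ht) (hyφ t ht)
  intro t ht
  simpa [sub_eq_zero] using hzero ht

theorem statement16 (a b : EReal) (hab : a < b) (I : Set ℝ)
    (hI1 : ∀ x : ℝ, a < (x : EReal) → (x : EReal) < b → x ∈ I)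
    (hI2 : ∀ x ∈ I, a ≤ (x : EReal) ∧ (x : EReal) ≤ b)
    (al be : ℝ → ℝ) (hal : ContinuousOn al I) (hbe : ContinuousOn be I)
    (hker : ∀ t ∈ I, IntegrableOn
      (fun s => Real.exp (∫ τ in s..t, al τ)) {s : ℝ | a < (s : EReal) ∧ s < t})
    (hbdd : BddAbove (kappa32 a al '' I)) :
    UlamStable2R I (fun t => !![al t, be t; -(be t), al t]) (sSup (kappa32 a al '' I)) ∧
    ((∀ t₀ : ℝ, a < (t₀ : EReal) → (t₀ : EReal) < b →
        Tendsto (fun t => ∫ s in t..t₀, al s)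
          (Filter.comap (fun x : ℝ => (x : EReal)) (nhdsWithin a (Ioi a))) atBot) →
      ∀ ε : ℝ, 0 < ε → ∀ φ φd : ℝ → Fin 2 → ℝ,
        (∀ t ∈ I, HasDerivWithinAt φ (φd t) I t) →
        ContinuousOn φd I →
        (∀ t ∈ I, enorm2 (φd t - (!![al t, be t; -(be t), al t]).mulVec (φ t)) ≤ ε) →
        ∃ x : ℝ → Fin 2 → ℝ,
          ((∀ t ∈ I, HasDerivWithinAt x ((!![al t, be t; -(be t), al t]).mulVec (x t)) I t) ∧
            ∀ t ∈ I, enorm2 (φ t - x t) ≤ sSup (kappa32 a al '' I) * ε) ∧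
          ∀ y : ℝ → Fin 2 → ℝ,
            ((∀ t ∈ I, HasDerivWithinAt y ((!![al t, be t; -(be t), al t]).mulVec (y t)) I t) ∧
              ∀ t ∈ I, enorm2 (φ t - y t) ≤ sSup (kappa32 a al '' I) * ε) →
            EqOn y x I) := by
  obtain ⟨t₀, hat₀, ht₀b⟩ := EReal.exists_between_coe_real hab
  have ht₀ : t₀ ∈ I := hI1 t₀ hat₀ ht₀b
  have hUlam : UlamStable2R I (fun t => !![al t, be t; -(be t), al t]) (sSup (kappa32 a al '' I)) :=
    ⟨lt_csSup_of_lt hbdd (mem_image_of_mem _ ht₀) (kappa32_pos hat₀ (hker t₀ ht₀)),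
      fun ε hε φ φd hφ hφd hq => by
        obtain ⟨x, hx, hbound⟩ := exists_solution_enorm2_sub_le hab hI1 hI2 hal hbe hker hφ hφd hq
        exact ⟨x, hx, fun t ht => (hbound t ht).trans
          (mul_le_mul_of_nonneg_right (le_csSup hbdd (mem_image_of_mem _ ht)) hε.le)⟩⟩
  refine ⟨hUlam, fun hlim ε hε φ φd hφ hφd hq => ?_⟩
  obtain ⟨x, hx, hbound⟩ := hUlam.2 ε hε φ φd hφ hφd hq
  exact ⟨x, ⟨hx, hbound⟩, fun y hy =>
    eqOn_of_enorm2_sub_le hab hI1 hI2 hal hbe hlim hx hy.1 hbound hy.2⟩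
end
end
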